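/- arXiv:2511.09205 — 7 statements merged into one kernel-verified Lean document; each statement's English description precedes it below -/
import Mathlib

section
/- Let h : ℝ → ℝ be three times continuously differentiable with bounded third derivative (C^{2,1} with norm at most L), h ≥ 0 on ℝ, and set β := h(0) > 0. Then h''(0) ≥ -C · β^{1/3}, where C depends only on L. -/
lemma taylor2_bound (L : ℝ) (h : ℝ → ℝ) (hh : ContDiff ℝ 2 h)
    (hLip : ∀ x y, |deriv (deriv h) x - deriv (deriv h) y| ≤ L * |x - y|) (t : ℝ) :
    |h t - h 0 - deriv h 0 * t - deriv (deriv h) 0 * t ^ 2 / 2| ≤ L * |t| ^ 3 := by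
  have hd1 : Differentiable ℝ h := hh.differentiable (by norm_num)
  have hd2 : Differentiable ℝ (deriv h) :=
    ((contDiff_succ_iff_deriv.mp (by exact_mod_cast hh : ContDiff ℝ (1+1) h)).2.2).differentiable
      (by norm_num)
  set D := deriv (deriv h) 0 with hD
  set f₁ : ℝ → ℝ := fun x => deriv h x - deriv h 0 - D * x with hf₁
  have hf₁deriv : ∀ x, HasDerivAt f₁ (deriv (deriv h) x - D) x := by
    intro x
    have := (((hd2 x).hasDerivAt).sub_const (deriv h 0)).sub
      ((hasDerivAt_id x).const_mul D)
    simpa [mul_one, Pi.sub_def] using this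
  have habs : ∀ t x : ℝ, x ∈ Set.uIcc (0:ℝ) t → |x| ≤ |t| := by
    intro t x hx
    rw [Set.uIcc, Set.mem_Icc] at hx
    exact abs_le.mpr ⟨le_trans (le_min (neg_nonpos.mpr (abs_nonneg t)) (neg_abs_le t)) hx.1,
      le_trans hx.2 (max_le (abs_nonneg t) (le_abs_self t))⟩
  -- Step A : |f₁ x| ≤ L * x ^ 2
  have stepA : ∀ x : ℝ, |f₁ x| ≤ L * x ^ 2 := by
    intro x
    have key := Convex.norm_image_sub_le_of_norm_deriv_le (C := L * |x|) (s := Set.uIcc (0:ℝ) x)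
      (fun y _ => (hf₁deriv y).differentiableAt)
      (fun y hy => by
        rw [(hf₁deriv y).deriv, Real.norm_eq_abs]
        calc |deriv (deriv h) y - D| ≤ L * |y - 0| := hLip y 0
          _ ≤ L * |x| := by
              have hLnn : 0 ≤ L := by
                have h1 := hLip 1 0
                have h2 := abs_nonneg (deriv (deriv h) 1 - deriv (deriv h) 0)
                simp only [sub_zero, abs_one, mul_one] at h1
                linarith
              have := habs x y hy
              rw [sub_zero]
              exact mul_le_mul_of_nonneg_left this hLnn)
      (convex_uIcc 0 x) Set.left_mem_uIcc Set.right_mem_uIcc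
    have hf₁0 : f₁ 0 = 0 := by simp [hf₁]
    rw [hf₁0, sub_zero, sub_zero, Real.norm_eq_abs, Real.norm_eq_abs] at key
    calc |f₁ x| ≤ L * |x| * |x| := key
      _ = L * x ^ 2 := by rw [mul_assoc, ← abs_mul, ← sq, abs_sq]
  -- Step B
  set f₂ : ℝ → ℝ := fun x => h x - h 0 - deriv h 0 * x - D * x ^ 2 / 2 with hf₂
  have hf₂deriv : ∀ x, HasDerivAt f₂ (f₁ x) x := by
    intro x
    have h1 : HasDerivAt (fun x : ℝ => D * x ^ 2 / 2) (D * x) x := by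
      have := ((hasDerivAt_pow 2 x).const_mul D).div_const 2
      exact this.congr_deriv (by ring)
    have := ((((hd1 x).hasDerivAt).sub_const (h 0)).sub
      ((hasDerivAt_id x).const_mul (deriv h 0))).sub h1
    simpa [hf₁, mul_one, Pi.sub_def] using this
  have key := Convex.norm_image_sub_le_of_norm_deriv_le (C := L * t ^ 2) (s := Set.uIcc (0:ℝ) t)
    (fun y _ => (hf₂deriv y).differentiableAt)
    (fun y hy => by
      rw [(hf₂deriv y).deriv, Real.norm_eq_abs]
      refine (stepA y).trans ?_
      have hy' := habs t y hy
      have hLnn : 0 ≤ L := by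
        have := (abs_nonneg (f₁ 1)).trans (stepA 1)
        simpa using this
      have : y ^ 2 ≤ t ^ 2 := by
        rw [← abs_sq y, ← abs_sq t, abs_sq, abs_sq, ← sq_abs y, ← sq_abs t]
        exact pow_le_pow_left₀ (abs_nonneg y) hy' 2
      nlinarith)
    (convex_uIcc 0 t) Set.left_mem_uIcc Set.right_mem_uIcc
  have hf₂0 : f₂ 0 = 0 := by simp [hf₂]
  rw [hf₂0, sub_zero, sub_zero, Real.norm_eq_abs, Real.norm_eq_abs] at key
  calc |h t - h 0 - deriv h 0 * t - D * t ^ 2 / 2| = |f₂ t| := by rw [hf₂]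
    _ ≤ L * t ^ 2 * |t| := key
    _ = L * |t| ^ 3 := by rw [← sq_abs t]; ring

/-- Inequality (7.3): for a nonnegative `C^{2,1}` function `h` with norm at most `L`
and `β = h(0) > 0`, one has `h''(0) ≥ -C β^{1/3}` with `C` depending only on `L`. -/
theorem stmt2 (L : ℝ) (hL : 0 ≤ L) :
    ∃ C : ℝ, ∀ h : ℝ → ℝ, ContDiff ℝ 2 h →
      (∀ x, 0 ≤ h x) →
      (∀ x, |h x| ≤ L) → (∀ x, |deriv h x| ≤ L) → (∀ x, |deriv (deriv h) x| ≤ L) →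
      (∀ x y, |deriv (deriv h) x - deriv (deriv h) y| ≤ L * |x - y|) →
      0 < h 0 →
      deriv (deriv h) 0 ≥ -C * (h 0) ^ ((1 : ℝ) / 3) := by
  refine ⟨2 + 2 * L, fun h hh hpos _ _ _ hLip hβ => ?_⟩
  set β := h 0 with hβdef
  set t : ℝ := β ^ ((1 : ℝ) / 3) with htdef
  have ht : 0 < t := Real.rpow_pos_of_pos hβ _
  have ht3 : t ^ 3 = β := by
    rw [htdef, ← Real.rpow_natCast (β ^ ((1:ℝ)/3)) 3, ← Real.rpow_mul hβ.le]
    norm_num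
  have A := taylor2_bound L h hh hLip t
  have B := taylor2_bound L h hh hLip (-t)
  rw [abs_of_pos ht] at A
  rw [abs_neg, abs_of_pos ht] at B
  have hA := abs_le.mp A
  have hB := abs_le.mp B
  have hpt := hpos t
  have hpnt := hpos (-t)
  have ht2 : 0 < t ^ 2 := by positivity
  nlinarith [hA.1, hB.1, mul_pos ht ht, sq_nonneg t]
end

section
/- Let h : ℝ → ℝ be C^{2,1} with C^{2,1}-norm at most L, h ≥ 0 on ℝ, and β := h(0) > 0. Then |h'(0)| / √β ≤ (1/2) h''(0) β^{-1/6} + C β^{1/6}, where C depends only on L. -/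
open Set

lemma iterWithin_eq_nhds {n : ℕ} {f : ℝ → ℝ} {s : Set ℝ} {x : ℝ} (hs : s ∈ nhds x) :
    iteratedDerivWithin n f s x = iteratedDeriv n f x := by
  rw [iteratedDerivWithin_eq_iteratedFDerivWithin, iteratedDeriv_eq_iteratedFDeriv]
  congr 1
  have := iteratedFDerivWithin_inter (s := Set.univ) (f := f) (n := n) (𝕜 := ℝ) hs
  simpa [iteratedFDerivWithin_univ] using this

lemma taylor_one_side (L : ℝ) {h : ℝ → ℝ} (hC : ContDiff ℝ 2 h)
    (hLip : ∀ x y, |deriv (deriv h) x - deriv (deriv h) y| ≤ L * |x - y|)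
    {t : ℝ} (ht : 0 < t) (hpos : 0 ≤ h t) :
    -(t * deriv h 0) ≤ h 0 + deriv (deriv h) 0 * t ^ 2 / 2 + L * t ^ 3 / 2 := by
  have hdiff : Differentiable ℝ h := hC.differentiable (by norm_num)
  have hC1 : ContDiff ℝ 1 (deriv h) := by
    have : ContDiff ℝ ((1 : ℕ) + 1) h := by exact_mod_cast hC
    exact (contDiff_succ_iff_deriv.mp this).2.2
  obtain ⟨x', hx', heq⟩ := taylor_mean_remainder_lagrange (n := 1) ht.ne
    ((hC.of_le (by norm_num)).contDiffOn)
    (by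
      rw [Set.uIcc_of_le ht.le, Set.uIoo_of_le ht.le]
      apply DifferentiableOn.congr (f := deriv h)
      · exact (hC1.differentiable one_ne_zero).differentiableOn
      · intro x hx
        rw [iteratedDerivWithin_one]
        exact (hdiff x).derivWithin ((uniqueDiffOn_Icc ht) x (Ioo_subset_Icc_self hx)))
  rw [Set.uIoo_of_le ht.le] at hx'
  rw [Set.uIcc_of_le ht.le] at heq
  have htay : taylorWithinEval h 1 (Icc 0 t) 0 t = h 0 + t * deriv h 0 := by
    rw [taylorWithinEval_succ, taylor_within_zero_eval]
    rw [iteratedDerivWithin_one]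
    rw [(hdiff 0).derivWithin ((uniqueDiffOn_Icc ht) 0 (by simp [ht.le]))]
    simp
  have hiter : iteratedDerivWithin 2 h (Icc 0 t) x' = deriv (deriv h) x' := by
    rw [iterWithin_eq_nhds (Icc_mem_nhds hx'.1 hx'.2)]
    rw [show (2 : ℕ) = 1 + 1 from rfl, iteratedDeriv_succ, iteratedDeriv_one]
  rw [htay, hiter] at heq
  have hxt : h t = h 0 + t * deriv h 0 + deriv (deriv h) x' * t ^ 2 / 2 := by
    have := heq
    norm_num [Nat.factorial] at this
    linarith
  have hclose : deriv (deriv h) x' * t ^ 2 / 2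
      ≤ deriv (deriv h) 0 * t ^ 2 / 2 + L * t ^ 3 / 2 := by
    have h1 : |deriv (deriv h) x' - deriv (deriv h) 0| ≤ L * |x' - 0| := hLip x' 0
    have h2 : |x' - 0| ≤ t := by
      rw [sub_zero, abs_of_pos hx'.1]; exact hx'.2.le
    have hL : 0 ≤ L := by
      have := hLip 1 0
      simp at this
      exact le_trans (abs_nonneg _) this
    have h3 : deriv (deriv h) x' - deriv (deriv h) 0 ≤ L * t :=
      le_trans (le_abs_self _) (le_trans h1 (by nlinarith))
    nlinarith [sq_nonneg t, ht.le, mul_pos ht (mul_pos ht ht)]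
  linarith

/-- Inequality (7.4): for a nonnegative `C^{2,1}` function `h` with norm at most `L`
and `β = h(0) > 0`, one has `|h'(0)|/√β ≤ (1/2) h''(0) β^{-1/6} + C β^{1/6}`. -/
theorem stmt3 (L : ℝ) (hL : 0 ≤ L) :
    ∃ C : ℝ, ∀ h : ℝ → ℝ, ContDiff ℝ 2 h →
      (∀ x, 0 ≤ h x) →
      (∀ x, |h x| ≤ L) → (∀ x, |deriv h x| ≤ L) → (∀ x, |deriv (deriv h) x| ≤ L) →
      (∀ x y, |deriv (deriv h) x - deriv (deriv h) y| ≤ L * |x - y|) →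
      0 < h 0 →
      |deriv h 0| / Real.sqrt (h 0)
        ≤ (1 / 2) * deriv (deriv h) 0 * (h 0) ^ (-(1 : ℝ) / 6)
          + C * (h 0) ^ ((1 : ℝ) / 6) := by
  refine ⟨1 + L / 2, fun h hC hpos _ _ _ hLip hβ => ?_⟩
  set β := h 0 with hβdef
  set u := β ^ ((1 : ℝ) / 6) with hu
  have hu0 : 0 < u := Real.rpow_pos_of_pos hβ _
  have hpow : ∀ n : ℕ, u ^ n = β ^ ((n : ℝ) / 6) := by
    intro n
    rw [hu, ← Real.rpow_natCast (β ^ ((1 : ℝ) / 6)) n, ← Real.rpow_mul hβ.le]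
    ring_nf
  set t := u ^ 2 with htdef
  have ht0 : 0 < t := pow_pos hu0 2
  -- Taylor on both sides
  have hgC : ContDiff ℝ 2 (fun x => h (-x)) := hC.comp contDiff_neg
  have hg1 : deriv (fun x => h (-x)) = fun x => -deriv h (-x) := by
    funext x; exact deriv_comp_neg (f := h) (x := x)
  have hg2 : ∀ x, deriv (deriv (fun x => h (-x))) x = deriv (deriv h) (-x) := by
    intro x
    rw [hg1]
    rw [deriv.fun_neg (𝕜 := ℝ) (f := fun y => deriv h (-y)), deriv_comp_neg (f := deriv h), neg_neg]
  have hA := taylor_one_side L hC hLip ht0 (hpos t)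
  have hB := taylor_one_side L hgC (fun x y => by
      rw [hg2, hg2]
      have := hLip (-x) (-y)
      rwa [show (-x) - (-y) = -(x - y) by ring, abs_neg] at this) ht0 (hpos (-t))
  simp only [hg2] at hB
  rw [hg1] at hB
  simp only [neg_zero] at hB
  have habs : |deriv h 0| * t ≤ β + deriv (deriv h) 0 * t ^ 2 / 2 + L * t ^ 3 / 2 := by
    rcases abs_cases (deriv h 0) with ⟨he, _⟩ | ⟨he, _⟩ <;> rw [he] <;>
      nlinarith [hβdef.le, hβdef.ge]
  -- now convert powers
  have hβu : β = u ^ 6 := by rw [hpow 6]; norm_num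
  have hsq : Real.sqrt β = u ^ 3 := by
    rw [hpow 3, Real.sqrt_eq_rpow]; norm_num
  have hneg : β ^ (-(1 : ℝ) / 6) = u⁻¹ := by
    rw [show -(1 : ℝ) / 6 = -(1 / 6) by ring, Real.rpow_neg hβ.le, hu]
  rw [hsq, hneg, div_le_iff₀ (pow_pos hu0 3)]
  have hinv : u⁻¹ * u ^ 3 = u ^ 2 := by
    field_simp
  have expand : ((1 : ℝ) / 2 * deriv (deriv h) 0 * u⁻¹ + (1 + L / 2) * u) * u ^ 3
      = 1 / 2 * deriv (deriv h) 0 * u ^ 2 + (1 + L / 2) * u ^ 4 := by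
    field_simp
  rw [expand]
  -- from habs with t = u^2, β = u^6
  have h2 : |deriv h 0| * u ^ 2 ≤ u ^ 6 + deriv (deriv h) 0 * u ^ 4 / 2 + L * u ^ 6 / 2 := by
    calc |deriv h 0| * u ^ 2 = |deriv h 0| * t := by rw [htdef]
    _ ≤ β + deriv (deriv h) 0 * t ^ 2 / 2 + L * t ^ 3 / 2 := habs
    _ = u ^ 6 + deriv (deriv h) 0 * u ^ 4 / 2 + L * u ^ 6 / 2 := by rw [hβu, htdef]; ring
  have hu2 : (0 : ℝ) < u ^ 2 := pow_pos hu0 2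
  nlinarith [mul_pos hu2 hu2, sq_nonneg u, abs_nonneg (deriv h 0)]
end

section
/- Let h : ℝ → ℝ be a nonnegative C^{2,1} function with h'' Lipschitz of constant L, β := h(0) > 0, and let 0 < α < 1/2. Then there exists K depending only on α and L such that h''(0) - α |h'(0)|² / h(0) ≥ -K · h(0)^{1/3}. -/
lemma taylor_upper (φ : ℝ → ℝ) (hφ : ContDiff ℝ 2 φ) (M t : ℝ) (ht : 0 ≤ t)
    (hM : ∀ y ∈ Set.Icc (0:ℝ) t, deriv (deriv φ) y ≤ M) :
    φ t ≤ φ 0 + deriv φ 0 * t + M * t ^ 2 / 2 := by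
  have h2 : (2 : WithTop ℕ∞) = 1 + 1 := by norm_num
  have hφ' : ContDiff ℝ 1 (deriv φ) := by
    have := (contDiff_succ_iff_deriv.mp (h2 ▸ hφ)).2.2
    exact this
  have hd1 : Differentiable ℝ φ := hφ.differentiable (by norm_num)
  have hd2 : Differentiable ℝ (deriv φ) := hφ'.differentiable (by norm_num)
  set g : ℝ → ℝ := fun x => deriv φ 0 + M * x - deriv φ x with hg
  have hgd : ∀ x, HasDerivAt g (M - deriv (deriv φ) x) x := by
    intro x
    have h1 : HasDerivAt (fun x : ℝ => deriv φ 0 + M * x) (M) x := by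
      simpa using (hasDerivAt_id x).const_mul M |>.const_add (deriv φ 0)
    exact h1.sub (hd2 x).hasDerivAt
  have hgmono : MonotoneOn g (Set.Icc 0 t) := by
    apply monotoneOn_of_deriv_nonneg (convex_Icc 0 t)
    · exact fun x _ => ((hgd x).continuousAt).continuousWithinAt
    · exact fun x _ => ((hgd x).differentiableAt).differentiableWithinAt
    · intro x hx
      rw [interior_Icc] at hx
      rw [(hgd x).deriv]
      have := hM x ⟨hx.1.le, hx.2.le⟩
      linarith
  have hg0 : g 0 = 0 := by simp [hg]
  have hgnn : ∀ x ∈ Set.Icc (0:ℝ) t, 0 ≤ g x := by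
    intro x hx
    have := hgmono (Set.left_mem_Icc.mpr ht) hx hx.1
    simpa [hg0] using this
  set F : ℝ → ℝ := fun x => φ 0 + deriv φ 0 * x + M * x ^ 2 / 2 - φ x with hF
  have hFd : ∀ x, HasDerivAt F (g x) x := by
    intro x
    have h1 : HasDerivAt (fun x : ℝ => φ 0 + deriv φ 0 * x + M * x ^ 2 / 2)
        (deriv φ 0 + M * x) x := by
      have ha : HasDerivAt (fun x : ℝ => φ 0 + deriv φ 0 * x) (deriv φ 0) x := by
        simpa using (hasDerivAt_id x).const_mul (deriv φ 0) |>.const_add (φ 0)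
      have hb : HasDerivAt (fun x : ℝ => M * x ^ 2 / 2) (M * x) x := by
        have := ((hasDerivAt_pow 2 x).const_mul M).div_const 2
        exact this.congr_deriv (by norm_num [mul_div_assoc])
      exact ha.add hb
    have := h1.sub (hd1 x).hasDerivAt
    exact this
  have hFmono : MonotoneOn F (Set.Icc 0 t) := by
    apply monotoneOn_of_deriv_nonneg (convex_Icc 0 t)
    · exact fun x _ => ((hFd x).continuousAt).continuousWithinAt
    · exact fun x _ => ((hFd x).differentiableAt).differentiableWithinAt
    · intro x hx
      rw [interior_Icc] at hx
      rw [(hFd x).deriv]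
      exact hgnn x ⟨hx.1.le, hx.2.le⟩
  have hF0 : F 0 = 0 := by simp [hF]
  have := hFmono (Set.left_mem_Icc.mpr ht) (Set.right_mem_Icc.mpr ht) ht
  rw [hF0] at this
  simpa [hF, sub_nonneg] using this

/-- One-dimensional core of Lemma 2.2(ii): for nonnegative `C^{2,1}` `h` with `h''`
`L`-Lipschitz, `h(0) > 0` and `0 < α < 1/2`,
`h''(0) - α h'(0)²/h(0) ≥ -K h(0)^{1/3}` with `K = K(α, L)`. -/
theorem stmt4 (α L : ℝ) (hα0 : 0 < α) (hα : α < 1 / 2) (hL : 0 ≤ L) :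
    ∃ K : ℝ, ∀ h : ℝ → ℝ, ContDiff ℝ 2 h →
      (∀ x, 0 ≤ h x) →
      (∀ x y, |deriv (deriv h) x - deriv (deriv h) y| ≤ L * |x - y|) →
      0 < h 0 →
      deriv (deriv h) 0 - α * (deriv h 0) ^ 2 / h 0 ≥ -K * (h 0) ^ ((1 : ℝ) / 3) := by
  refine ⟨2 + L + α * (2 + 2 * Real.sqrt 2 * L + L ^ 2), ?_⟩
  intro h hC hnn hLip hβ
  set β : ℝ := h 0 with hβdef
  set a : ℝ := deriv h 0 with hadef
  set b : ℝ := deriv (deriv h) 0 with hbdef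
  set c : ℝ := β ^ ((1:ℝ)/3) with hcdef
  have hc : 0 < c := Real.rpow_pos_of_pos hβ _
  have hc3 : c ^ 3 = β := by
    rw [hcdef, ← Real.rpow_natCast (β ^ ((1:ℝ)/3)) 3, ← Real.rpow_mul hβ.le]
    norm_num
  set g : ℝ → ℝ := fun x => h (-x) with hgdef
  have hgC : ContDiff ℝ 2 g := hC.comp (contDiff_neg)
  have hg0 : g 0 = β := by simp [hgdef, hβdef]
  have hg1 : deriv g 0 = -a := by
    rw [hgdef, deriv_comp_neg, neg_zero]
  have hg2 : ∀ y, deriv (deriv g) y = deriv (deriv h) (-y) := by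
    intro y
    have e1 : deriv g = fun x => -deriv h (-x) := by
      funext x; rw [hgdef, deriv_comp_neg]
    rw [e1]
    have : deriv (fun x => -deriv h (-x)) y = -deriv (fun x => deriv h (-x)) y := by
      simp [deriv.neg]
    rw [this, deriv_comp_neg, neg_neg]
  -- main two-sided estimate for any t > 0
  have key : ∀ t : ℝ, 0 < t →
      0 ≤ β + a * t + (b + L * t) * t ^ 2 / 2 ∧
      0 ≤ β - a * t + (b + L * t) * t ^ 2 / 2 := by
    intro t ht
    have hMh : ∀ y ∈ Set.Icc (0:ℝ) t, deriv (deriv h) y ≤ b + L * t := by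
      intro y hy
      have h1 := hLip y 0
      have h2 : deriv (deriv h) y - b ≤ L * |y - 0| := le_trans (le_abs_self _) h1
      have h3 : |y - 0| ≤ t := by
        rw [sub_zero, abs_of_nonneg hy.1]; exact hy.2
      nlinarith [mul_le_mul_of_nonneg_left h3 hL]
    have hMg : ∀ y ∈ Set.Icc (0:ℝ) t, deriv (deriv g) y ≤ b + L * t := by
      intro y hy
      rw [hg2]
      have h1 := hLip (-y) 0
      have h2 : deriv (deriv h) (-y) - b ≤ L * |(-y) - 0| := le_trans (le_abs_self _) h1
      have h3 : |(-y) - 0| ≤ t := by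
        rw [sub_zero, abs_neg, abs_of_nonneg hy.1]; exact hy.2
      nlinarith [mul_le_mul_of_nonneg_left h3 hL]
    have k1 := taylor_upper h hC (b + L * t) t ht.le hMh
    have k2 := taylor_upper g hgC (b + L * t) t ht.le hMg
    rw [hg0, hg1] at k2
    have p1 := hnn t
    have p2 := hnn (-t)
    have hgt : g t = h (-t) := rfl
    rw [hgt] at k2
    exact ⟨by linarith, by linarith⟩
  -- Step B : lower bound on b
  have hbc : b ≥ -(2 + L) * c := by
    obtain ⟨k1, k2⟩ := key c hc
    have hc2 : (0:ℝ) < c ^ 2 := by positivity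
    nlinarith
  clear_value a b β c
  clear hg0 hg1 hg2 hgC hgdef hLip hnn hC hβdef hadef hbdef hcdef g h
  -- Step C
  set m : ℝ := max b 0 + c with hmdef
  have hmax : (0:ℝ) ≤ max b 0 := le_max_right _ _
  have hm : 0 < m := by linarith
  set t2 : ℝ := Real.sqrt (2 * β / m) with ht2def
  have ht2pos : 0 < t2 := Real.sqrt_pos.mpr (by positivity)
  have ht2sq : t2 ^ 2 = 2 * β / m := Real.sq_sqrt (by positivity)
  have hmt2 : m * t2 ^ 2 = 2 * β := by
    rw [ht2sq]; field_simp
  have ht2le : t2 ≤ Real.sqrt 2 * c := by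
    have hcm : c ≤ m := by rw [hmdef]; linarith
    have h1 : 2 * β / m ≤ 2 * c ^ 2 := by
      rw [div_le_iff₀ hm]
      nlinarith [hc3]
    calc t2 ≤ Real.sqrt (2 * c ^ 2) := Real.sqrt_le_sqrt h1
      _ = Real.sqrt 2 * c := by
          rw [Real.sqrt_mul (by norm_num), Real.sqrt_sq hc.le]
  -- |a| ≤ m t2 + L t2²/2
  have habs : |a| ≤ m * t2 + L * t2 ^ 2 / 2 := by
    obtain ⟨k1, k2⟩ := key t2 ht2pos
    have hbm : b + L * t2 ≤ m + L * t2 := by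
      rw [hmdef]; linarith [le_max_left b 0]
    have ht2sq' : (0:ℝ) ≤ t2 ^ 2 / 2 := by positivity
    have e1 : (b + L * t2) * t2 ^ 2 / 2 ≤ (m + L * t2) * t2 ^ 2 / 2 := by
      nlinarith [mul_le_mul_of_nonneg_right hbm (le_of_lt (by positivity : (0:ℝ) < t2 ^ 2))]
    have e2 : (m + L * t2) * t2 ^ 2 / 2 = β + L * t2 ^ 3 / 2 := by
      linear_combination hmt2 / 2
    have ka : a * t2 ≤ 2 * β + L * t2 ^ 3 / 2 := by linarith
    have kb : -(a * t2) ≤ 2 * β + L * t2 ^ 3 / 2 := by linarith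
    have kabs : |a| * t2 ≤ 2 * β + L * t2 ^ 3 / 2 := by
      rcases abs_cases a with ⟨e, _⟩ | ⟨e, _⟩ <;> rw [e] <;> [exact ka; simpa [neg_mul] using kb]
    have heq : (m * t2 + L * t2 ^ 2 / 2) * t2 = 2 * β + L * t2 ^ 3 / 2 := by
      linear_combination hmt2
    have hfin : |a| * t2 ≤ (m * t2 + L * t2 ^ 2 / 2) * t2 := by rw [heq]; exact kabs
    exact le_of_mul_le_mul_right hfin ht2pos
  have hs2nn : (0:ℝ) ≤ Real.sqrt 2 := Real.sqrt_nonneg 2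
  have hs2 : Real.sqrt 2 ^ 2 = 2 := Real.sq_sqrt (by norm_num)
  have ht2two : t2 ^ 2 ≤ 2 * c ^ 2 := by
    have h1 := pow_le_pow_left₀ ht2pos.le ht2le 2
    have e : (Real.sqrt 2 * c) ^ 2 = 2 * c ^ 2 := by rw [mul_pow, hs2]
    linarith [e ▸ h1]
  have ht2four : t2 ^ 4 ≤ 4 * β * c := by
    have h1 : (t2 ^ 2) ^ 2 ≤ (2 * c ^ 2) ^ 2 := pow_le_pow_left₀ (by positivity) ht2two 2
    calc t2 ^ 4 = (t2 ^ 2) ^ 2 := by ring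
      _ ≤ (2 * c ^ 2) ^ 2 := h1
      _ = 4 * β * c := by linear_combination 4 * c * hc3
  have hβt2 : β * t2 ≤ Real.sqrt 2 * β * c := by
    calc β * t2 ≤ β * (Real.sqrt 2 * c) := mul_le_mul_of_nonneg_left ht2le hβ.le
      _ = Real.sqrt 2 * β * c := by ring
  have hX : (0:ℝ) ≤ m * t2 + L * t2 ^ 2 / 2 := by positivity
  have ha2 : a ^ 2 ≤ 2 * β * max b 0 + (2 + 2 * Real.sqrt 2 * L + L ^ 2) * β * c := by
    have h0 : a ^ 2 ≤ (m * t2 + L * t2 ^ 2 / 2) ^ 2 := by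
      have := pow_le_pow_left₀ (abs_nonneg a) habs 2
      rwa [sq_abs] at this
    have hexp : (m * t2 + L * t2 ^ 2 / 2) ^ 2
        = m * (m * t2 ^ 2) + L * t2 * (m * t2 ^ 2) / 2 * 2 - L * t2 * (m * t2 ^ 2)
          + L * t2 * (m * t2 ^ 2) + L ^ 2 * t2 ^ 4 / 4 := by ring
    rw [hexp, hmt2] at h0
    have h0' : a ^ 2 ≤ m * (2 * β) + L * t2 * (2 * β) + L ^ 2 * t2 ^ 4 / 4 := by linarith
    have hLt2 : L * t2 * (2 * β) ≤ 2 * Real.sqrt 2 * L * β * c := by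
      calc L * t2 * (2 * β) = 2 * L * (β * t2) := by ring
        _ ≤ 2 * L * (Real.sqrt 2 * β * c) := mul_le_mul_of_nonneg_left hβt2 (by linarith)
        _ = 2 * Real.sqrt 2 * L * β * c := by ring
    have hL2 : L ^ 2 * t2 ^ 4 / 4 ≤ L ^ 2 * β * c := by
      calc L ^ 2 * t2 ^ 4 / 4 = L ^ 2 / 4 * t2 ^ 4 := by ring
        _ ≤ L ^ 2 / 4 * (4 * β * c) := mul_le_mul_of_nonneg_left ht2four (by positivity)
        _ = L ^ 2 * β * c := by ring
    have hmm : m * (2 * β) = 2 * β * max b 0 + 2 * β * c := by rw [hmdef]; ring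
    linarith
  have hdiv : α * a ^ 2 / β ≤ 2 * α * max b 0 + α * (2 + 2 * Real.sqrt 2 * L + L ^ 2) * c := by
    rw [div_le_iff₀ hβ]
    calc α * a ^ 2 ≤ α * (2 * β * max b 0 + (2 + 2 * Real.sqrt 2 * L + L ^ 2) * β * c) :=
          mul_le_mul_of_nonneg_left ha2 hα0.le
      _ = (2 * α * max b 0 + α * (2 + 2 * Real.sqrt 2 * L + L ^ 2) * c) * β := by ring
  have hfin : b - 2 * α * max b 0 ≥ -(2 + L) * c := by
    rcases le_or_gt b 0 with hb | hb
    · rw [max_eq_right hb]; simpa using hbc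
    · rw [max_eq_left hb.le]
      have h1 : 0 ≤ (1 - 2 * α) * b := mul_nonneg (by linarith) hb.le
      have h2 : (0:ℝ) ≤ (2 + L) * c := by positivity
      linarith only [h1, h2]
  linarith only [hdiv, hfin]
end

section
/- Let h ∈ C^{3,1}(ℝ) be a nonnegative function of the form h(t) = α t² + β t³ + R(t) for all t ∈ ℝ, where α ≥ 0, β ∈ ℝ, and |R(t)| ≤ γ |t|⁴ for some γ > 0. Then |β| ≤ (1 + γ) √α. -/
/-- Lemma 6.2 (Guan–Trudinger–Wang (3.5)): if `h ≥ 0` with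
`h(t) = α t² + β t³ + R(t)`, `α ≥ 0`, `|R(t)| ≤ γ |t|⁴`, then `|β| ≤ (1+γ)√α`. -/
theorem stmt6 (h R : ℝ → ℝ) (α β γ : ℝ) (hα : 0 ≤ α) (hγ : 0 < γ)
    (hnn : ∀ t, 0 ≤ h t)
    (hform : ∀ t, h t = α * t ^ 2 + β * t ^ 3 + R t)
    (hR : ∀ t, |R t| ≤ γ * |t| ^ 4) :
    |β| ≤ (1 + γ) * Real.sqrt α := by
  rcases eq_or_lt_of_le hα with hα0 | hαpos
  · -- α = 0 : show |β| ≤ 0 via ∀ ε > 0, |β| ≤ ε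
    have hβ0 : |β| ≤ 0 := by
      apply le_of_forall_pos_le_add
      intro ε hε
      have key : ∀ t : ℝ, -(γ * |t| ^ 4) ≤ β * t ^ 3 := by
        intro t
        have h1 := hnn t
        have h2 := (abs_le.mp (hR t)).2
        rw [hform t, ← hα0] at h1
        linarith
      have htpos : (0:ℝ) < ε / γ := div_pos hε hγ
      have hp3 : (0:ℝ) < (ε / γ) ^ 3 := pow_pos htpos 3
      have hpos := key (ε / γ)
      have hneg := key (-(ε / γ))
      have habs : |ε / γ| = ε / γ := abs_of_pos htpos
      have habs2 : |(-(ε / γ))| = ε / γ := by rw [abs_neg, habs]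
      rw [habs] at hpos
      rw [habs2] at hneg
      have keyeq : γ * (ε / γ) ^ 4 = ε * (ε / γ) ^ 3 := by
        field_simp
      rw [keyeq] at hpos hneg
      rw [abs_le]
      constructor
      · have : -ε * (ε / γ) ^ 3 ≤ β * (ε / γ) ^ 3 := by linarith
        have := (mul_le_mul_iff_left₀ hp3).mp this
        linarith
      · have hneg' : (-β) * (ε / γ) ^ 3 ≥ -ε * (ε / γ) ^ 3 := by nlinarith [hneg]
        have := (mul_le_mul_iff_left₀ hp3).mp hneg'
        linarith
    have := abs_nonneg β
    have hβ : β = 0 := abs_eq_zero.mp (le_antisymm hβ0 this)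
    rw [hβ, abs_zero]
    positivity
  · set s := Real.sqrt α with hs
    have hspos : 0 < s := Real.sqrt_pos.mpr hαpos
    have hs2 : s ^ 2 = α := Real.sq_sqrt hα
    have hp3 : (0:ℝ) < s ^ 3 := pow_pos hspos 3
    have h1 := hnn s
    have h2 := hnn (-s)
    rw [hform s, ← hs2] at h1
    rw [hform (-s), ← hs2] at h2
    have hR1 := (abs_le.mp (hR s)).2
    have hR2 := (abs_le.mp (hR (-s))).2
    rw [abs_of_pos hspos] at hR1
    have habs : |(-s)| = s := by rw [abs_neg, abs_of_pos hspos]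
    rw [habs] at hR2
    rw [abs_le]
    constructor
    · have key : (-((1 + γ) * s)) * s ^ 3 ≤ β * s ^ 3 := by nlinarith [h1, hR1]
      exact (mul_le_mul_iff_left₀ hp3).mp key
    · have key : β * s ^ 3 ≤ ((1 + γ) * s) * s ^ 3 := by nlinarith [h2, hR2]
      exact (mul_le_mul_iff_left₀ hp3).mp key
end

section
/- The function g : ℝⁿ → ℝ defined by g(x) = |x|⁴ (1 + sin(1/|x|)) for x ≠ 0 and g(0) = 0 is C^{1,1} near the origin (its gradient is Lipschitz), but its Hessian D²g is not continuous at the origin. -/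
open Real

noncomputable def cfun (r : ℝ) : ℝ := 4*r^3*(1+Real.sin r⁻¹) - r^2*Real.cos r⁻¹
noncomputable def cdfun (r : ℝ) : ℝ := 12*r^2*(1+Real.sin r⁻¹) - 6*r*Real.cos r⁻¹ - Real.sin r⁻¹

lemma cfun_zero : cfun 0 = 0 := by simp [cfun]
lemma cdfun_zero : cdfun 0 = 0 := by simp [cdfun]

lemma hasDerivAt_cfun {r : ℝ} (hr : r ≠ 0) : HasDerivAt cfun (cdfun r) r := by
  have hinv : HasDerivAt (fun r : ℝ => r⁻¹) (-(r^2)⁻¹) r := hasDerivAt_inv hr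
  have hsin := hinv.sin
  have hcos := hinv.cos
  have h1 : HasDerivAt (fun r : ℝ => 4*r^3) (4*(3*r^2)) r := by
    simpa using (hasDerivAt_pow 3 r).const_mul 4
  have h2 : HasDerivAt (fun r : ℝ => r^2) (2*r) r := by
    simpa using hasDerivAt_pow 2 r
  have := (h1.mul ((hasDerivAt_const r (1:ℝ)).add hsin)).sub (h2.mul hcos)
  refine (show HasDerivAt cfun _ r from this).congr_deriv ?_
  simp only [cdfun, Pi.add_apply]
  field_simp
  ring

lemma hasDerivAt_cfun_zero : HasDerivAt cfun 0 0 := by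
  rw [hasDerivAt_iff_tendsto_slope]
  apply squeeze_zero_norm' (a := fun r : ℝ => 9 * |r|)
  · filter_upwards [self_mem_nhdsWithin,
      eventually_nhdsWithin_of_eventually_nhds
        (Metric.eventually_nhds_iff.2 ⟨1, one_pos, fun {y} hy => hy.le⟩)] with r hr h1
    have hr : r ≠ 0 := hr
    have h1 : |r| ≤ 1 := by simpa [Real.dist_eq] using h1
    rw [slope_def_field, cfun_zero]
    have : (cfun r - 0) / (r - 0) = 4*r^2*(1+Real.sin r⁻¹) - r*Real.cos r⁻¹ := by
      simp only [cfun]; field_simp; ring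
    rw [this, Real.norm_eq_abs]
    have hs := Real.neg_one_le_sin r⁻¹
    have hs' := Real.sin_le_one r⁻¹
    have hc := Real.neg_one_le_cos r⁻¹
    have hc' := Real.cos_le_one r⁻¹
    have h2 := abs_le.1 h1
    rw [abs_le]
    constructor <;> nlinarith [sq_nonneg r, abs_nonneg r, le_abs_self r, neg_abs_le r, sq_abs r]
  · have : Filter.Tendsto (fun r : ℝ => 9 * |r|) (nhds 0) (nhds 0) := by
      have := (continuous_abs.tendsto (0:ℝ)).const_mul (9:ℝ)
      simpa using this
    exact this.mono_left nhdsWithin_le_nhds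

lemma abs_cfun_le {r : ℝ} (h : |r| ≤ 1) : |cfun r| ≤ 9 * r^2 := by
  have hs := Real.neg_one_le_sin r⁻¹
  have hs' := Real.sin_le_one r⁻¹
  have hc := Real.neg_one_le_cos r⁻¹
  have hc' := Real.cos_le_one r⁻¹
  have h2 := abs_le.1 h
  rw [cfun, abs_le]
  constructor <;> nlinarith [sq_nonneg r, sq_abs r, le_abs_self r, neg_abs_le r, sq_nonneg (r*(1-r)), sq_nonneg (r*(1+r))]

lemma abs_cdfun_le {r : ℝ} (h : |r| ≤ 1) : |cdfun r| ≤ 31 := by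
  have hs := Real.neg_one_le_sin r⁻¹
  have hs' := Real.sin_le_one r⁻¹
  have hc := Real.neg_one_le_cos r⁻¹
  have hc' := Real.cos_le_one r⁻¹
  have h2 := abs_le.1 h
  rw [cdfun, abs_le]
  constructor <;> nlinarith [sq_nonneg r, sq_abs r, le_abs_self r, neg_abs_le r]

lemma diffAt_cfun (r : ℝ) : DifferentiableAt ℝ cfun r := by
  rcases eq_or_ne r 0 with h | h
  · exact h ▸ hasDerivAt_cfun_zero.differentiableAt
  · exact (hasDerivAt_cfun h).differentiableAt

lemma deriv_cfun_bound {r : ℝ} (h : |r| ≤ 1) : |deriv cfun r| ≤ 31 := by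
  rcases eq_or_ne r 0 with h0 | h0
  · rw [h0, hasDerivAt_cfun_zero.deriv]; norm_num
  · rw [(hasDerivAt_cfun h0).deriv]; exact abs_cdfun_le h

lemma cfun_lipschitz : LipschitzOnWith 31 cfun (Set.Icc (-1 : ℝ) 1) := by
  apply (convex_Icc (-1:ℝ) 1).lipschitzOnWith_of_nnnorm_deriv_le
    (fun x _ => diffAt_cfun x)
  intro x hx
  rw [← NNReal.coe_le_coe, coe_nnnorm, Real.norm_eq_abs]
  push_cast
  exact deriv_cfun_bound (abs_le.2 ⟨hx.1, hx.2⟩)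

lemma cfun_lip {a b : ℝ} (ha : |a| ≤ 1) (hb : |b| ≤ 1) : |cfun a - cfun b| ≤ 31 * |a - b| := by
  have := cfun_lipschitz.dist_le_mul a (abs_le.1 ha |> fun h => Set.mem_Icc.2 h) b (abs_le.1 hb |> fun h => Set.mem_Icc.2 h)
  simpa [Real.dist_eq] using this

noncomputable def Phi (r : ℝ) : ℝ := r^4*(1+Real.sin r⁻¹)

lemma Phi_zero : Phi 0 = 0 := by simp [Phi]

lemma abs_Phi_le (r : ℝ) : |Phi r| ≤ 2 * r^4 := by
  have hs := Real.neg_one_le_sin r⁻¹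
  have hs' := Real.sin_le_one r⁻¹
  rw [Phi, abs_le]
  constructor <;> nlinarith [sq_nonneg (r^2), sq_nonneg r, pow_two_nonneg (r^2), show r^4 = (r^2)^2 by ring, sq_nonneg (r^2)]

lemma hasDerivAt_Phi {r : ℝ} (hr : r ≠ 0) : HasDerivAt Phi (cfun r) r := by
  have hinv : HasDerivAt (fun r : ℝ => r⁻¹) (-(r^2)⁻¹) r := hasDerivAt_inv hr
  have hsin := hinv.sin
  have := (hasDerivAt_pow 4 r).mul ((hasDerivAt_const r (1:ℝ)).add hsin)
  refine (show HasDerivAt Phi _ r from this).congr_deriv ?_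
  simp only [cfun, Pi.add_apply]
  field_simp
  ring

section Vec

variable {E : Type*} [NormedAddCommGroup E] [InnerProductSpace ℝ E]

lemma hasFDerivAt_norm' {x : E} (hx : x ≠ 0) :
    HasFDerivAt (fun y : E => ‖y‖) (‖x‖⁻¹ • innerSL ℝ x) x := by
  have h1 : HasFDerivAt (fun y : E => ‖y‖^2) ((2:ℕ) • innerSL ℝ x) x :=
    (hasStrictFDerivAt_norm_sq x).hasFDerivAt
  have hx2 : ‖x‖^2 ≠ 0 := pow_ne_zero 2 (norm_ne_zero_iff.2 hx)
  have h2 := h1.sqrt hx2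
  have heq : (fun y : E => Real.sqrt (‖y‖^2)) = fun y : E => ‖y‖ :=
    funext fun y => Real.sqrt_sq (norm_nonneg y)
  rw [heq] at h2
  convert h2 using 1
  rw [Real.sqrt_sq (norm_nonneg x)]
  ext y
  simp only [ContinuousLinearMap.smul_apply, smul_eq_mul, ContinuousLinearMap.coe_smul',
    Pi.smul_apply]
  have hnx : ‖x‖ ≠ 0 := norm_ne_zero_iff.2 hx
  push_cast
  rw [div_mul_eq_mul_div, mul_comm]
  rw [eq_div_iff (mul_ne_zero two_ne_zero hnx), nsmul_eq_mul]
  push_cast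
  field_simp

end Vec

section Vec2

variable {E : Type*} [NormedAddCommGroup E] [InnerProductSpace ℝ E]

noncomputable def wv (x : E) : E := (cfun ‖x‖ * ‖x‖⁻¹) • x

lemma wv_zero : wv (0 : E) = 0 := by simp [wv]

lemma norm_wv {x : E} (hx : x ≠ 0) : ‖wv x‖ = |cfun ‖x‖| := by
  have hnx : ‖x‖ ≠ 0 := norm_ne_zero_iff.2 hx
  rw [wv, norm_smul, Real.norm_eq_abs, abs_mul, abs_inv, abs_norm]
  field_simp

lemma norm_wv_le {x : E} (hx : ‖x‖ ≤ 1) : ‖wv x‖ ≤ 9 * ‖x‖^2 := by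
  rcases eq_or_ne x 0 with h | h
  · simp [h, wv_zero]
  · rw [norm_wv h]
    exact abs_cfun_le (by rwa [abs_norm])

lemma hasFDerivAt_g_of_ne {g : E → ℝ} (hgPhi : ∀ y : E, g y = Phi ‖y‖)
    {x : E} (hx : x ≠ 0) : HasFDerivAt g (innerSL ℝ (wv x)) x := by
  have hnx : ‖x‖ ≠ 0 := norm_ne_zero_iff.2 hx
  have h := (hasDerivAt_Phi hnx).comp_hasFDerivAt x (hasFDerivAt_norm' hx)
  have h' : HasFDerivAt g (cfun ‖x‖ • ‖x‖⁻¹ • innerSL ℝ x) x := by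
    apply h.congr_of_eventuallyEq
    filter_upwards with y
    simp [Function.comp, hgPhi y]
  convert h' using 1
  rw [wv, map_smul, smul_smul]

lemma hasFDerivAt_g_zero {g : E → ℝ} (hgPhi : ∀ y : E, g y = Phi ‖y‖) :
    HasFDerivAt g (0 : E →L[ℝ] ℝ) 0 := by
  rw [hasFDerivAt_iff_isLittleO_nhds_zero]
  rw [Asymptotics.isLittleO_iff]
  intro c hc
  have hmem : Metric.ball (0:E) (min 1 (c/2)) ∈ nhds (0:E) :=
    Metric.ball_mem_nhds 0 (lt_min one_pos (half_pos hc))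
  filter_upwards [hmem] with h hh
  rw [Metric.mem_ball, dist_zero_right] at hh
  have h1 : ‖h‖ ≤ 1 := le_of_lt (lt_of_lt_of_le hh (min_le_left _ _))
  have h2 : ‖h‖ ≤ c/2 := le_of_lt (lt_of_lt_of_le hh (min_le_right _ _))
  have : g (0 + h) - g 0 - (0 : E →L[ℝ] ℝ) h = Phi ‖h‖ := by
    rw [hgPhi, hgPhi]
    simp [Phi_zero]
  rw [this, Real.norm_eq_abs]
  calc |Phi ‖h‖| ≤ 2 * ‖h‖^4 := abs_Phi_le ‖h‖
    _ ≤ c * ‖h‖ := by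
        have h0 := norm_nonneg h
        have h3 : ‖h‖^3 ≤ ‖h‖ := by nlinarith [sq_nonneg ‖h‖, sq_nonneg (‖h‖ - 1), sq_nonneg (‖h‖ + 1), mul_nonneg h0 h0]
        nlinarith

lemma fderiv_g_eq {g : E → ℝ} (hgPhi : ∀ y : E, g y = Phi ‖y‖) (x : E) :
    fderiv ℝ g x = innerSL ℝ (wv x) := by
  rcases eq_or_ne x 0 with h | h
  · rw [h, (hasFDerivAt_g_zero hgPhi).fderiv, wv_zero, map_zero]
  · exact (hasFDerivAt_g_of_ne hgPhi h).fderiv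

end Vec2

section Vec3

variable {E : Type*} [NormedAddCommGroup E] [InnerProductSpace ℝ E]

lemma unit_sub_le {x y : E} (hx : x ≠ 0) (hy : y ≠ 0) (h : ‖y‖ ≤ ‖x‖) :
    ‖‖x‖⁻¹ • x - ‖y‖⁻¹ • y‖ ≤ 2 * ‖x - y‖ / ‖x‖ := by
  have hnx : (0:ℝ) < ‖x‖ := norm_pos_iff.2 hx
  have hny : (0:ℝ) < ‖y‖ := norm_pos_iff.2 hy
  have key : ‖x‖⁻¹ • x - ‖y‖⁻¹ • y = ‖x‖⁻¹ • (x - y) + (‖x‖⁻¹ - ‖y‖⁻¹) • y := by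
    rw [smul_sub, sub_smul]
    abel
  rw [key]
  calc ‖‖x‖⁻¹ • (x - y) + (‖x‖⁻¹ - ‖y‖⁻¹) • y‖
      ≤ ‖‖x‖⁻¹ • (x - y)‖ + ‖(‖x‖⁻¹ - ‖y‖⁻¹) • y‖ := norm_add_le _ _
    _ = ‖x‖⁻¹ * ‖x - y‖ + |‖x‖⁻¹ - ‖y‖⁻¹| * ‖y‖ := by
        rw [norm_smul, norm_smul, Real.norm_eq_abs, Real.norm_eq_abs, abs_inv, abs_norm]
    _ ≤ 2 * ‖x - y‖ / ‖x‖ := by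
        have habs : |‖x‖⁻¹ - ‖y‖⁻¹| = (‖x‖ - ‖y‖) / (‖x‖ * ‖y‖) := by
          rw [abs_of_nonpos (by
            rw [sub_nonpos]
            exact inv_anti₀ hny h)]
          field_simp
          ring
        rw [habs]
        have hd : ‖x‖ - ‖y‖ ≤ ‖x - y‖ := (abs_le.1 (abs_norm_sub_norm_le x y)).1 |> fun _ => by
          have := norm_sub_norm_le x y
          linarith
        have e1 : (‖x‖ - ‖y‖) / (‖x‖ * ‖y‖) * ‖y‖ = (‖x‖ - ‖y‖) / ‖x‖ := by
          field_simp
        rw [e1, inv_mul_eq_div, ← add_div, div_le_div_iff₀ hnx hnx]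
        nlinarith [norm_nonneg (x - y)]

end Vec3

section Vec4

variable {E : Type*} [NormedAddCommGroup E] [InnerProductSpace ℝ E]

lemma wv_smul_form (x : E) : wv x = cfun ‖x‖ • (‖x‖⁻¹ • x) := by
  rw [wv, smul_smul]

lemma wv_pair_le {x y : E} (hx1 : ‖x‖ ≤ 1) (hy1 : ‖y‖ ≤ 1) (h : ‖y‖ ≤ ‖x‖) :
    ‖wv x - wv y‖ ≤ 49 * ‖x - y‖ := by
  rcases eq_or_ne x 0 with hx0 | hx0
  · have hy0 : y = 0 := by
      rw [hx0, norm_zero] at h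
      exact norm_le_zero_iff.1 h
    simp [hx0, hy0, wv_zero]
  rcases eq_or_ne y 0 with hy0 | hy0
  · rw [hy0, wv_zero, sub_zero, sub_zero]
    calc ‖wv x‖ ≤ 9 * ‖x‖^2 := norm_wv_le hx1
      _ ≤ 49 * ‖x‖ := by nlinarith [norm_nonneg x]
  have hnx : (0:ℝ) < ‖x‖ := norm_pos_iff.2 hx0
  have hny : (0:ℝ) < ‖y‖ := norm_pos_iff.2 hy0
  have key : wv x - wv y =
      (cfun ‖x‖ - cfun ‖y‖) • (‖x‖⁻¹ • x) + cfun ‖y‖ • (‖x‖⁻¹ • x - ‖y‖⁻¹ • y) := by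
    rw [wv_smul_form, wv_smul_form, sub_smul, smul_sub]
    abel
  have hxhat : ‖(‖x‖⁻¹ • x : E)‖ = 1 := by
    rw [norm_smul, Real.norm_eq_abs, abs_inv, abs_norm, inv_mul_cancel₀ hnx.ne']
  have hlip : |cfun ‖x‖ - cfun ‖y‖| ≤ 31 * ‖x - y‖ := by
    calc |cfun ‖x‖ - cfun ‖y‖| ≤ 31 * |‖x‖ - ‖y‖| :=
          cfun_lip (by rwa [abs_norm]) (by rwa [abs_norm])
      _ ≤ 31 * ‖x - y‖ := by
          have := abs_norm_sub_norm_le x y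
          nlinarith
  have hcy : |cfun ‖y‖| ≤ 9 * ‖y‖^2 := abs_cfun_le (by rwa [abs_norm])
  have hu := unit_sub_le hx0 hy0 h
  rw [key]
  calc ‖(cfun ‖x‖ - cfun ‖y‖) • (‖x‖⁻¹ • x) + cfun ‖y‖ • (‖x‖⁻¹ • x - ‖y‖⁻¹ • y)‖
      ≤ ‖(cfun ‖x‖ - cfun ‖y‖) • (‖x‖⁻¹ • x : E)‖ + ‖cfun ‖y‖ • (‖x‖⁻¹ • x - ‖y‖⁻¹ • y)‖ :=
        norm_add_le _ _
    _ = |cfun ‖x‖ - cfun ‖y‖| + |cfun ‖y‖| * ‖‖x‖⁻¹ • x - ‖y‖⁻¹ • y‖ := by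
        have e1 : ‖(cfun ‖x‖ - cfun ‖y‖) • (‖x‖⁻¹ • x : E)‖ = |cfun ‖x‖ - cfun ‖y‖| := by
          rw [norm_smul, Real.norm_eq_abs, hxhat, mul_one]
        have e2 : ‖cfun ‖y‖ • (‖x‖⁻¹ • x - ‖y‖⁻¹ • y)‖
            = |cfun ‖y‖| * ‖‖x‖⁻¹ • x - ‖y‖⁻¹ • y‖ := by
          rw [norm_smul, Real.norm_eq_abs]
        rw [e1, e2]
    _ ≤ 31 * ‖x - y‖ + (9 * ‖y‖^2) * (2 * ‖x - y‖ / ‖x‖) := by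
        gcongr
    _ ≤ 49 * ‖x - y‖ := by
        have h1 : (9 * ‖y‖^2) * (2 * ‖x - y‖ / ‖x‖) ≤ 18 * ‖x - y‖ := by
          rw [div_eq_mul_inv]
          have h2 : ‖y‖^2 * ‖x‖⁻¹ ≤ 1 := by
            rw [← div_eq_mul_inv, div_le_one hnx]
            nlinarith
          calc 9 * ‖y‖^2 * (2 * ‖x - y‖ * ‖x‖⁻¹) = 18 * ‖x - y‖ * (‖y‖^2 * ‖x‖⁻¹) := by ring
            _ ≤ 18 * ‖x - y‖ * 1 := by
                apply mul_le_mul_of_nonneg_left h2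
                positivity
            _ = 18 * ‖x - y‖ := mul_one _
        linarith
  
lemma wv_lipschitz : LipschitzOnWith 49 (wv : E → E) (Metric.ball 0 1) := by
  rw [lipschitzOnWith_iff_dist_le_mul]
  intro x hx y hy
  rw [Metric.mem_ball, dist_zero_right] at hx hy
  have hx1 : ‖x‖ ≤ 1 := hx.le
  have hy1 : ‖y‖ ≤ 1 := hy.le
  rw [dist_eq_norm, dist_eq_norm]
  rcases le_total ‖y‖ ‖x‖ with h | h
  · simpa using wv_pair_le hx1 hy1 h
  · rw [norm_sub_rev, norm_sub_rev x y]
    simpa using wv_pair_le hy1 hx1 h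

end Vec4

section Vec5

variable {E : Type*} [NormedAddCommGroup E] [InnerProductSpace ℝ E]

lemma hasFDerivAt_fderiv_g_zero {g : E → ℝ} (hgPhi : ∀ y : E, g y = Phi ‖y‖) :
    HasFDerivAt (fderiv ℝ g) (0 : E →L[ℝ] (E →L[ℝ] ℝ)) 0 := by
  rw [hasFDerivAt_iff_isLittleO_nhds_zero, Asymptotics.isLittleO_iff]
  intro c hc
  have hmem : Metric.ball (0:E) (min 1 (c/9)) ∈ nhds (0:E) :=
    Metric.ball_mem_nhds 0 (lt_min one_pos (div_pos hc (by norm_num)))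
  filter_upwards [hmem] with h hh
  rw [Metric.mem_ball, dist_zero_right] at hh
  have h1 : ‖h‖ ≤ 1 := le_of_lt (lt_of_lt_of_le hh (min_le_left _ _))
  have h2 : ‖h‖ ≤ c/9 := le_of_lt (lt_of_lt_of_le hh (min_le_right _ _))
  have e1 : fderiv ℝ g (0 + h) - fderiv ℝ g 0 - (0 : E →L[ℝ] (E →L[ℝ] ℝ)) h
      = innerSL ℝ (wv h) := by
    rw [fderiv_g_eq hgPhi, fderiv_g_eq hgPhi, wv_zero, map_zero, zero_add]
    simp
  rw [e1, innerSL_apply_norm]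
  calc ‖wv h‖ ≤ 9 * ‖h‖^2 := norm_wv_le h1
    _ ≤ c * ‖h‖ := by nlinarith [norm_nonneg h]

lemma hasFDerivAt_wv {x : E} (hx : x ≠ 0) :
    HasFDerivAt (wv : E → E)
      ((cfun ‖x‖ * ‖x‖⁻¹) • ContinuousLinearMap.id ℝ E +
        ContinuousLinearMap.smulRight
          ((cdfun ‖x‖ * ‖x‖⁻¹ + cfun ‖x‖ * -(‖x‖ ^ 2)⁻¹) • (‖x‖⁻¹ • innerSL ℝ x)) x) x := by
  have hnx : ‖x‖ ≠ 0 := norm_ne_zero_iff.2 hx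
  have hσ : HasFDerivAt (fun y : E => cfun ‖y‖ * ‖y‖⁻¹)
      ((cdfun ‖x‖ * ‖x‖⁻¹ + cfun ‖x‖ * -(‖x‖ ^ 2)⁻¹) • (‖x‖⁻¹ • innerSL ℝ x)) x := by
    have hr : HasDerivAt (fun r : ℝ => cfun r * r⁻¹)
        (cdfun ‖x‖ * ‖x‖⁻¹ + cfun ‖x‖ * -(‖x‖ ^ 2)⁻¹) ‖x‖ :=
      (hasDerivAt_cfun hnx).mul (hasDerivAt_inv hnx)
    exact hr.comp_hasFDerivAt x (hasFDerivAt_norm' hx)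
  exact hσ.smul (hasFDerivAt_id x)

lemma fderiv_fderiv_apply {g : E → ℝ} (hgPhi : ∀ y : E, g y = Phi ‖y‖)
    {e : E} (he : ‖e‖ = 1) {r : ℝ} (hr : 0 < r) :
    fderiv ℝ (fderiv ℝ g) (r • e) e e = cdfun r := by
  set x : E := r • e with hxdef
  have hnorm : ‖x‖ = r := by
    rw [hxdef, norm_smul, Real.norm_eq_abs, abs_of_pos hr, he, mul_one]
  have hx : x ≠ 0 := by
    rw [← norm_ne_zero_iff, hnorm]; exact hr.ne'
  have hw := hasFDerivAt_wv hx
  have hF : HasFDerivAt (fderiv ℝ g)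
      ((innerSL ℝ (E := E)).comp
        ((cfun ‖x‖ * ‖x‖⁻¹) • ContinuousLinearMap.id ℝ E +
          ContinuousLinearMap.smulRight
            ((cdfun ‖x‖ * ‖x‖⁻¹ + cfun ‖x‖ * -(‖x‖ ^ 2)⁻¹) • (‖x‖⁻¹ • innerSL ℝ x)) x)) x := by
    have heq : fderiv ℝ g = fun y : E => innerSL ℝ (wv y) := funext (fderiv_g_eq hgPhi)
    rw [heq]
    exact (innerSL ℝ (E := E)).hasFDerivAt.comp x hw
  rw [hF.fderiv]
  have hie : (inner ℝ e e : ℝ) = 1 := by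
    rw [real_inner_self_eq_norm_sq, he, one_pow]
  have hxe : (inner ℝ x e : ℝ) = r := by
    rw [hxdef, real_inner_smul_left, hie, mul_one]
  have hne : ‖x‖ ≠ 0 := by rw [hnorm]; exact hr.ne'
  simp only [ContinuousLinearMap.coe_comp', Function.comp_apply,
    ContinuousLinearMap.add_apply, ContinuousLinearMap.smul_apply,
    ContinuousLinearMap.id_apply, ContinuousLinearMap.smulRight_apply,
    ContinuousLinearMap.coe_smul', Pi.smul_apply, innerSL_apply_apply, smul_eq_mul]
  rw [inner_add_left, real_inner_smul_left, real_inner_smul_left, hie, hxe, hnorm]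
  field_simp
  ring

end Vec5

noncomputable def rk (k : ℕ) : ℝ := (Real.pi/2 + (k : ℝ) * (2 * Real.pi))⁻¹

lemma rk_denom_pos (k : ℕ) : 0 < Real.pi/2 + (k : ℝ) * (2 * Real.pi) := by
  have := Real.pi_pos
  positivity

lemma rk_pos (k : ℕ) : 0 < rk k := inv_pos.2 (rk_denom_pos k)

lemma cdfun_rk (k : ℕ) : cdfun (rk k) = 24 * (rk k)^2 - 1 := by
  have hsin : Real.sin (rk k)⁻¹ = 1 := by
    rw [rk, inv_inv, Real.sin_add_nat_mul_two_pi, Real.sin_pi_div_two]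
  have hcos : Real.cos (rk k)⁻¹ = 0 := by
    rw [rk, inv_inv, Real.cos_add_nat_mul_two_pi, Real.cos_pi_div_two]
  rw [cdfun, hsin, hcos]
  ring

lemma rk_tendsto : Filter.Tendsto rk Filter.atTop (nhds 0) := by
  apply Filter.Tendsto.inv_tendsto_atTop
  apply Filter.tendsto_atTop_add_const_left
  apply Filter.Tendsto.atTop_mul_const (by positivity : (0:ℝ) < 2 * Real.pi)
  exact tendsto_natCast_atTop_atTop

lemma rk_le_one (k : ℕ) : rk k ≤ 1 := by
  rw [rk]
  rw [inv_le_one_iff₀]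
  right
  have := Real.pi_gt_three
  have : (0:ℝ) ≤ (k:ℝ) * (2 * Real.pi) := by positivity
  linarith


/-- The function `g(x) = |x|⁴ (1 + sin(1/|x|))`, `g(0) = 0`, is `C^{1,1}` near the
origin (Lipschitz gradient on a ball), but its Hessian is not continuous at `0`. -/
theorem stmt7 (n : ℕ) (hn : 0 < n) (g : EuclideanSpace ℝ (Fin n) → ℝ)
    (hg : ∀ x : EuclideanSpace ℝ (Fin n), x ≠ 0 →
      g x = ‖x‖ ^ 4 * (1 + Real.sin (1 / ‖x‖)))
    (hg0 : g 0 = 0) :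
    (∃ ε > 0, (∀ x ∈ Metric.ball (0 : EuclideanSpace ℝ (Fin n)) ε, DifferentiableAt ℝ g x) ∧
      ∃ C : NNReal, LipschitzOnWith C (fderiv ℝ g) (Metric.ball 0 ε)) ∧
    ¬ ContinuousAt (iteratedFDeriv ℝ 2 g) 0 := by
  have hgPhi : ∀ y : EuclideanSpace ℝ (Fin n), g y = Phi ‖y‖ := by
    intro y
    rcases eq_or_ne y 0 with h | h
    · rw [h, hg0, norm_zero, Phi_zero]
    · rw [hg y h, Phi, one_div]
  constructor
  · refine ⟨1, one_pos, ?_, ⟨49, ?_⟩⟩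
    · intro x _
      rcases eq_or_ne x 0 with h | h
      · rw [h]; exact (hasFDerivAt_g_zero hgPhi).differentiableAt
      · exact (hasFDerivAt_g_of_ne hgPhi h).differentiableAt
    · rw [lipschitzOnWith_iff_dist_le_mul]
      intro x hx y hy
      rw [fderiv_g_eq hgPhi, fderiv_g_eq hgPhi, dist_eq_norm, ← map_sub, innerSL_apply_norm,
        ← dist_eq_norm]
      have := (lipschitzOnWith_iff_dist_le_mul.1 wv_lipschitz) x hx y hy
      convert this using 2
  · intro hcont
    set e : EuclideanSpace ℝ (Fin n) := EuclideanSpace.single (⟨0, hn⟩ : Fin n) (1:ℝ) with he_def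
    have he : ‖e‖ = 1 := by
      rw [he_def, EuclideanSpace.norm_single, norm_one]
    set u : ℕ → EuclideanSpace ℝ (Fin n) := fun k => rk k • e with hu_def
    have hu : Filter.Tendsto u Filter.atTop (nhds 0) := by
      have := rk_tendsto.smul_const e
      rwa [zero_smul] at this
    have h2 : Filter.Tendsto (fun k => iteratedFDeriv ℝ 2 g (u k)) Filter.atTop
        (nhds (iteratedFDeriv ℝ 2 g 0)) := hcont.tendsto.comp hu
    have h3 : Filter.Tendsto (fun k => iteratedFDeriv ℝ 2 g (u k) ![e, e]) Filter.atTop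
        (nhds (iteratedFDeriv ℝ 2 g 0 ![e, e])) :=
      ((continuous_eval_const (![e, e])).tendsto _).comp h2
    have hval : ∀ k, iteratedFDeriv ℝ 2 g (u k) ![e, e] = 24 * (rk k)^2 - 1 := by
      intro k
      rw [iteratedFDeriv_two_apply]
      simp only [Matrix.cons_val_zero, Matrix.cons_val_one, Matrix.head_cons]
      rw [hu_def]
      rw [fderiv_fderiv_apply hgPhi he (rk_pos k), cdfun_rk]
    have hval0 : iteratedFDeriv ℝ 2 g 0 ![e, e] = 0 := by
      rw [iteratedFDeriv_two_apply]
      simp only [Matrix.cons_val_zero, Matrix.cons_val_one, Matrix.head_cons]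
      rw [(hasFDerivAt_fderiv_g_zero hgPhi).fderiv]
      simp
    rw [hval0] at h3
    have h4 : Filter.Tendsto (fun k => 24 * (rk k)^2 - 1) Filter.atTop (nhds 0) := by
      have : (fun k => iteratedFDeriv ℝ 2 g (u k) ![e, e]) = fun k => 24 * (rk k)^2 - 1 :=
        funext hval
      rwa [this] at h3
    have h5 : Filter.Tendsto (fun k => 24 * (rk k)^2 - 1) Filter.atTop (nhds (-1 : ℝ)) := by
      have : Filter.Tendsto (fun k => 24 * (rk k)^2 - 1) Filter.atTop
          (nhds (24 * (0:ℝ)^2 - 1)) := by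
        exact (((rk_tendsto.pow 2).const_mul 24).sub tendsto_const_nhds)
      simpa using this
    have := tendsto_nhds_unique h4 h5
    norm_num at this
end

section
/- For λ ∈ Γ_k with 2 ≤ k ≤ n, there is a universal constant C₂ > 0 (depending only on n and k) such that σ_{k-1}(λ) ≥ C₂ σ₁(λ)^{1/(k-1)} σ_k(λ)^{(k-2)/(k-1)}. -/
open Polynomial

namespace NewtonAux


lemma esymm_zero' (s : Multiset ℝ) : s.esymm 0 = 1 := by
  simp [Multiset.esymm]

lemma esymm_big (s : Multiset ℝ) {k : ℕ} (h : Multiset.card s < k) : s.esymm k = 0 := by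
  simp [Multiset.esymm, Multiset.powersetCard_eq_empty _ h]

lemma esymm_cons (a : ℝ) (s : Multiset ℝ) (k : ℕ) :
    (a ::ₘ s).esymm (k+1) = s.esymm (k+1) + a * s.esymm k := by
  simp only [Multiset.esymm, Multiset.powersetCard_cons, Multiset.map_add, Multiset.sum_add,
    Multiset.map_map, Function.comp_def, Multiset.prod_cons]
  rw [Multiset.sum_map_mul_left]

lemma esymm_card (s : Multiset ℝ) : s.esymm (Multiset.card s) = s.prod := by
  induction s using Multiset.induction_on with
  | empty => simp [esymm_zero']
  | cons a s ih =>
    rw [Multiset.card_cons, esymm_cons, esymm_big s (Nat.lt_succ_self _), ih,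
      Multiset.prod_cons, zero_add]

lemma newton_base (s : Multiset ℝ) : 2 * s.esymm 2 ≤ s.esymm 1 ^ 2 := by
  induction s using Multiset.induction_on with
  | empty => rw [esymm_big 0 (k := 2) (by simp), esymm_big 0 (k := 1) (by simp)]; norm_num
  | cons a s ih =>
    have h1 : (a ::ₘ s).esymm 1 = s.esymm 1 + a * 1 := by
      rw [show (1:ℕ) = 0 + 1 from rfl, esymm_cons, esymm_zero']
    have h2 : (a ::ₘ s).esymm 2 = s.esymm 2 + a * s.esymm 1 := by
      rw [show (2:ℕ) = 1 + 1 from rfl, esymm_cons]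
    rw [h1, h2]
    nlinarith [sq_nonneg a]



lemma esymm_inv (s : Multiset ℝ) (h0 : (0:ℝ) ∉ s) :
    ∀ j ≤ Multiset.card s,
      s.esymm (Multiset.card s - j) = s.prod * (s.map Inv.inv).esymm j := by
  induction s using Multiset.induction_on with
  | empty =>
    intro j hj
    obtain rfl : j = 0 := by simpa using hj
    simp [esymm_zero']
  | cons a s ih =>
    have ha : a ≠ 0 := fun h => h0 (h ▸ Multiset.mem_cons_self a s)
    have h0s : (0:ℝ) ∉ s := fun h => h0 (Multiset.mem_cons_of_mem h)
    intro j hj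
    rw [Multiset.card_cons] at hj
    rcases j with _ | j
    · rw [Nat.sub_zero, esymm_zero', mul_one, esymm_card]
    · rw [Multiset.card_cons, Nat.succ_sub_succ, Multiset.map_cons, esymm_cons,
        Multiset.prod_cons]
      rcases Nat.lt_or_ge j (Multiset.card s) with hlt | hge
      · have h1 : Multiset.card s - j = (Multiset.card s - (j+1)) + 1 := by omega
        rw [h1, esymm_cons, ← h1, ih h0s j (le_of_lt hlt), ih h0s (j+1) hlt]
        field_simp
        ring
      · have hj' : j = Multiset.card s := le_antisymm (by omega) hge
        subst hj'
        have hinv : (s.map Inv.inv).esymm (Multiset.card s) = (s.map Inv.inv).prod := by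
          rw [← Multiset.card_map Inv.inv s, esymm_card]
        rw [Nat.sub_self, esymm_zero', esymm_big (s.map Inv.inv) (by simp [Nat.lt_succ_self]),
          hinv, Multiset.prod_map_inv]
        have hps : s.prod ≠ 0 := Multiset.prod_ne_zero h0s
        field_simp
        simp [Multiset.map_id', hps]

lemma newton_top (s : Multiset ℝ) (h2 : 2 ≤ Multiset.card s) :
    2 * (s.esymm (Multiset.card s) * s.esymm (Multiset.card s - 2))
      ≤ s.esymm (Multiset.card s - 1) ^ 2 := by
  by_cases h0 : (0:ℝ) ∈ s
  · rw [esymm_card, Multiset.prod_eq_zero h0, zero_mul, mul_zero]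
    exact sq_nonneg _
  · have e1 := esymm_inv s h0 1 (by omega)
    have e2 := esymm_inv s h0 2 h2
    have ec := esymm_card s
    have hb := newton_base (s.map Inv.inv)
    rw [e1, e2, ec, mul_pow]
    nlinarith [sq_nonneg s.prod, sq_nonneg ((s.map Inv.inv).esymm 1)]



lemma splits_derivative {p : ℝ[X]} (hp : Splits p) :
    Splits (derivative p) := by
  by_cases h0 : p.natDegree = 0
  · obtain ⟨a, rfl⟩ := natDegree_eq_zero.mp h0
    rw [derivative_C]
    exact Splits.zero
  · have hpne : p ≠ 0 := fun h => h0 (h ▸ natDegree_zero)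
    have h1 : Multiset.card p.roots = p.natDegree := splits_iff_card_roots.mp hp
    have h2 := card_roots_le_derivative p
    have h3 := card_roots' (derivative p)
    have h4 : (derivative p).natDegree ≤ p.natDegree - 1 := natDegree_derivative_le p
    apply splits_iff_card_roots.mpr
    omega

lemma splits_iterate {p : ℝ[X]} (hp : Splits p) (m : ℕ) :
    Splits (derivative^[m] p) := by
  induction m with
  | zero => exact hp
  | succ m ih => rw [Function.iterate_succ_apply']; exact splits_derivative ih

noncomputable def polyOf (s : Multiset ℝ) : ℝ[X] := (s.map (fun r => C r * X + 1)).prod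

lemma polyOf_splits (s : Multiset ℝ) : Splits (polyOf s) := by
  induction s using Multiset.induction_on with
  | empty => simpa [polyOf] using Splits.one
  | cons a s ih =>
    rw [polyOf, Multiset.map_cons, Multiset.prod_cons]
    exact Splits.mul (Splits.of_natDegree_le_one (natDegree_linear_le)) ih

lemma polyOf_coeff (s : Multiset ℝ) : ∀ j, (polyOf s).coeff j = s.esymm j := by
  induction s using Multiset.induction_on with
  | empty =>
    intro j
    rcases j with _ | j
    · simp [polyOf, esymm_zero']
    · simp [polyOf, esymm_big 0 (Nat.succ_pos j), coeff_one]
  | cons a s ih =>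
    intro j
    rw [polyOf, Multiset.map_cons, Multiset.prod_cons, add_mul, one_mul, coeff_add, mul_assoc,
      coeff_C_mul]
    rcases j with _ | j
    · rw [mul_coeff_zero, coeff_X_zero, zero_mul, mul_zero, zero_add, ← polyOf, ih, esymm_zero',
        esymm_zero']
    · rw [coeff_X_mul, ← polyOf, ih, ih, esymm_cons]
      ring

lemma coeff_newton {p : ℝ[X]} (hp : Splits p) :
    2 * (p.coeff 0 * p.coeff 2) ≤ p.coeff 1 ^ 2 := by
  rcases lt_or_ge p.natDegree 2 with h2 | h2
  · rw [coeff_eq_zero_of_natDegree_lt h2, mul_zero, mul_zero]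
    exact sq_nonneg _
  · obtain ⟨m, hm⟩ : ∃ m, p.natDegree = m + 2 := ⟨p.natDegree - 2, by omega⟩
    have hD : Multiset.card p.roots = p.natDegree := splits_iff_card_roots.mp hp
    have hnt := newton_top p.roots (by omega)
    rw [hD, hm] at hnt
    simp only [Nat.add_sub_cancel, show m + 2 - 1 = m + 1 from rfl] at hnt
    rw [coeff_eq_esymm_roots_of_splits hp (by omega : 0 ≤ p.natDegree),
      coeff_eq_esymm_roots_of_splits hp (by omega : 1 ≤ p.natDegree),
      coeff_eq_esymm_roots_of_splits hp (by omega : 2 ≤ p.natDegree), hm]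
    simp only [Nat.add_sub_cancel, Nat.sub_zero, show m + 2 - 1 = m + 1 from rfl]
    have hs1 : ((-1:ℝ)) ^ (m+2) * (-1:ℝ) ^ m = 1 := by
      rw [← pow_add]
      exact Even.neg_one_pow ⟨m + 1, by ring⟩
    have hs2 : ((-1:ℝ) ^ (m+1)) ^ 2 = 1 := by
      rw [← pow_mul]
      exact Even.neg_one_pow ⟨m + 1, by ring⟩
    set L := p.leadingCoeff
    set eD := p.roots.esymm (m + 2)
    set e1 := p.roots.esymm (m + 1)
    set e0 := p.roots.esymm m
    calc 2 * (L * (-1:ℝ)^(m+2) * eD * (L * (-1:ℝ)^m * e0))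
        = L^2 * (2 * (eD * e0)) * ((-1:ℝ)^(m+2) * (-1:ℝ)^m) := by ring
      _ = L^2 * (2 * (eD * e0)) := by rw [hs1, mul_one]
      _ ≤ L^2 * e1^2 := mul_le_mul_of_nonneg_left hnt (sq_nonneg L)
      _ = (L * (-1:ℝ)^(m+1) * e1)^2 := by rw [mul_pow, mul_pow, hs2, mul_one]

lemma newton (s : Multiset ℝ) (m : ℕ) :
    s.esymm m * s.esymm (m + 2) ≤ s.esymm (m + 1) ^ 2 := by
  have h := coeff_newton (splits_iterate (polyOf_splits s) m)
  have hc : ∀ i : ℕ, (derivative^[m] (polyOf s)).coeff i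
      = ((i + m).descFactorial m : ℝ) * s.esymm (i + m) := by
    intro i
    rw [coeff_iterate_derivative, polyOf_coeff, nsmul_eq_mul]
  rw [hc 0, hc 1, hc 2] at h
  simp only [zero_add, Nat.zero_add] at h
  rw [show (2 + m) = m + 2 from by omega, show (1 + m) = m + 1 from by omega] at h
  -- constants
  have hA1 : (m + 1).descFactorial m = Nat.factorial (m + 1) := by
    have h1 : (m + 1).descFactorial (m + 1) = (m + 1 - m) * (m + 1).descFactorial m :=
      Nat.descFactorial_succ (m + 1) m
    have e : m + 1 - m = 1 := by omega
    rw [Nat.descFactorial_self, e, one_mul] at h1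
    exact h1.symm
  have hA2 : 2 * (m + 2).descFactorial m = Nat.factorial (m + 2) := by
    have h1 : (m + 2).descFactorial (m + 2) = (m + 2 - (m + 1)) * (m + 2).descFactorial (m + 1) :=
      Nat.descFactorial_succ _ _
    have h2 : (m + 2).descFactorial (m + 1) = (m + 2 - m) * (m + 2).descFactorial m :=
      Nat.descFactorial_succ _ _
    have e1 : m + 2 - (m + 1) = 1 := by omega
    have e2 : m + 2 - m = 2 := by omega
    rw [Nat.descFactorial_self, e1, one_mul, h2, e2] at h1
    exact h1.symm
  have hfact : Nat.factorial (m + 1) * Nat.factorial (m + 1)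
      ≤ Nat.factorial m * Nat.factorial (m + 2) := by
    have e1 : Nat.factorial (m + 2) = (m + 2) * Nat.factorial (m + 1) := rfl
    have e2 : Nat.factorial (m + 1) = (m + 1) * Nat.factorial m := rfl
    calc Nat.factorial (m + 1) * Nat.factorial (m + 1)
        ≤ Nat.factorial (m + 1) * ((m + 2) * Nat.factorial m) := by
          rw [e2]
          exact Nat.mul_le_mul le_rfl (Nat.mul_le_mul (by omega) le_rfl)
      _ = Nat.factorial m * Nat.factorial (m + 2) := by rw [e1, e2]; ring
  have hN : ((m + 1).descFactorial m : ℕ) ^ 2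
      ≤ 2 * (m.descFactorial m * (m + 2).descFactorial m) := by
    rw [hA1, Nat.descFactorial_self, pow_two]
    calc Nat.factorial (m + 1) * Nat.factorial (m + 1)
        ≤ Nat.factorial m * Nat.factorial (m + 2) := hfact
      _ = Nat.factorial m * (2 * (m + 2).descFactorial m) := by rw [hA2]
      _ = 2 * (Nat.factorial m * (m + 2).descFactorial m) := by ring
  have hNR : ((m + 1).descFactorial m : ℝ) ^ 2
      ≤ 2 * ((m.descFactorial m : ℝ) * ((m + 2).descFactorial m : ℝ)) := by
    exact_mod_cast hN
  have hp0 : (0:ℝ) < (m.descFactorial m : ℝ) := by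
    rw [Nat.descFactorial_self]
    exact_mod_cast Nat.factorial_pos m
  have hp2 : (0:ℝ) < ((m + 2).descFactorial m : ℝ) := by
    have h1 := Nat.factorial_pos (m + 2)
    have h2 : 0 < (m + 2).descFactorial m := by omega
    exact_mod_cast h2
  nlinarith [sq_nonneg (s.esymm (m+1)), mul_pos hp0 hp2,
    mul_nonneg (mul_nonneg hp0.le hp2.le) (sq_nonneg (s.esymm (m+1)))]


end NewtonAux

/-- The `k`-th elementary symmetric polynomial of `l : Fin n → ℝ`. -/
noncomputable def esymm (n k : ℕ) (l : Fin n → ℝ) : ℝ :=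
  ∑ s ∈ Finset.powersetCard k Finset.univ, ∏ i ∈ s, l i

/-- The Gårding cone `Γ_k ⊂ ℝⁿ`. -/
def GammaK (n k : ℕ) : Set (Fin n → ℝ) :=
  {l | ∀ j, 1 ≤ j → j ≤ k → 0 < esymm n j l}

/-- Newton–Maclaurin type inequality (2.2): for `λ ∈ Γ_k`,
`σ_{k-1}(λ) ≥ C₂ σ₁(λ)^{1/(k-1)} σ_k(λ)^{(k-2)/(k-1)}` with `C₂ = C₂(n,k) > 0`. -/
theorem stmt11 (n k : ℕ) (hk : 2 ≤ k) (hkn : k ≤ n) :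
    ∃ C₂ > (0 : ℝ), ∀ l ∈ GammaK n k,
      esymm n (k - 1) l
        ≥ C₂ * (esymm n 1 l) ^ (1 / ((k : ℝ) - 1))
            * (esymm n k l) ^ (((k : ℝ) - 2) / ((k : ℝ) - 1)) := by
  refine ⟨1, one_pos, ?_⟩
  intro l hl
  set M : Multiset ℝ := Finset.univ.val.map l with hM
  have hes : ∀ j, esymm n j l = M.esymm j := fun j =>
    (Finset.esymm_map_val l Finset.univ j).symm
  have hpos : ∀ j, j ≤ k → 0 < M.esymm j := by
    intro j hj
    rcases Nat.eq_zero_or_pos j with rfl | hj1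
    · rw [NewtonAux.esymm_zero']; exact one_pos
    · rw [← hes]; exact hl j hj1 hj
  have hB : ∀ m, m ≤ k - 1 →
      M.esymm k * M.esymm (k - 1 - m) ≤ M.esymm (k - 1) * M.esymm (k - m) := by
    intro m
    induction m with
    | zero =>
      intro _
      rw [Nat.sub_zero]
      exact le_of_eq (mul_comm _ _)
    | succ m ih =>
      intro hm
      obtain ⟨a, ha⟩ : ∃ a, k = a + (m + 2) := ⟨k - (m + 2), by omega⟩
      have e0 : k - 1 - (m + 1) = a := by omega
      have e1 : k - (m + 1) = a + 1 := by omega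
      have e2 : k - 1 - m = a + 1 := by omega
      have e3 : k - m = a + 2 := by omega
      have hNt := NewtonAux.newton M a
      have hIH := ih (by omega)
      rw [e2, e3] at hIH
      rw [e0, e1]
      have p1 := hpos (a + 1) (by omega)
      have p2 := hpos (a + 2) (by omega)
      have pk := hpos k le_rfl
      have pk1 := hpos (k - 1) (by omega)
      have pa := hpos a (by omega)
      nlinarith [mul_le_mul_of_nonneg_left hNt pk.le,
        mul_le_mul_of_nonneg_right hIH p1.le]
  have hC : ∀ m, m ≤ k - 2 →
      M.esymm (k - 1 - m) * M.esymm k ^ m ≤ M.esymm (k - 1) ^ (m + 1) := by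
    intro m
    induction m with
    | zero =>
      intro _
      rw [Nat.sub_zero, pow_zero, mul_one, pow_one]
    | succ m ih =>
      intro hm
      obtain ⟨a, ha⟩ : ∃ a, k = a + (m + 3) := ⟨k - (m + 3), by omega⟩
      have e0 : k - 1 - (m + 1) = a + 1 := by omega
      have e1 : k - 1 - m = a + 2 := by omega
      have hBm := hB (m + 1) (by omega)
      rw [e0, show k - (m + 1) = a + 2 from by omega] at hBm
      have hIH := ih (by omega)
      rw [e1] at hIH
      have pk := hpos k le_rfl
      have pk1 := hpos (k - 1) (by omega)
      rw [e0]
      calc M.esymm (a + 1) * M.esymm k ^ (m + 1)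
          = M.esymm k * M.esymm (a + 1) * M.esymm k ^ m := by ring
        _ ≤ M.esymm (k - 1) * M.esymm (a + 2) * M.esymm k ^ m := by
            exact mul_le_mul_of_nonneg_right hBm (pow_nonneg pk.le m)
        _ = M.esymm (k - 1) * (M.esymm (a + 2) * M.esymm k ^ m) := by ring
        _ ≤ M.esymm (k - 1) * M.esymm (k - 1) ^ (m + 1) :=
            mul_le_mul_of_nonneg_left hIH pk1.le
        _ = M.esymm (k - 1) ^ (m + 1 + 1) := by ring
  have key : M.esymm 1 * M.esymm k ^ (k - 2) ≤ M.esymm (k - 1) ^ (k - 1) := by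
    have h := hC (k - 2) le_rfl
    rw [show k - 1 - (k - 2) = 1 from by omega, show k - 2 + 1 = k - 1 from by omega] at h
    exact h
  -- rpow finish
  have hx := hpos 1 (by omega)
  have hy := hpos k le_rfl
  have hz := hpos (k - 1) (by omega)
  have hk1 : (0:ℝ) < (k:ℝ) - 1 := by
    have : (2:ℝ) ≤ (k:ℝ) := by exact_mod_cast hk
    linarith
  have hk2 : (0:ℝ) ≤ (k:ℝ) - 2 := by
    have : (2:ℝ) ≤ (k:ℝ) := by exact_mod_cast hk
    linarith
  have c2 : ((k - 2 : ℕ) : ℝ) = (k:ℝ) - 2 := by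
    rw [Nat.cast_sub hk]; norm_num
  have c1 : ((k - 1 : ℕ) : ℝ) = (k:ℝ) - 1 := by
    rw [Nat.cast_sub (by omega : 1 ≤ k)]; norm_num
  have hxy : M.esymm 1 * M.esymm k ^ ((k:ℝ) - 2) ≤ M.esymm (k - 1) ^ ((k:ℝ) - 1) := by
    rw [← c2, ← c1, Real.rpow_natCast, Real.rpow_natCast]
    exact key
  rw [hes (k - 1), hes 1, hes k, ge_iff_le, one_mul]
  calc M.esymm 1 ^ (1 / ((k:ℝ) - 1)) * M.esymm k ^ (((k:ℝ) - 2) / ((k:ℝ) - 1))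
      = (M.esymm 1 * M.esymm k ^ ((k:ℝ) - 2)) ^ (1 / ((k:ℝ) - 1)) := by
        rw [Real.mul_rpow hx.le (Real.rpow_nonneg hy.le _), ← Real.rpow_mul hy.le]
        rw [mul_one_div]
    _ ≤ (M.esymm (k - 1) ^ ((k:ℝ) - 1)) ^ (1 / ((k:ℝ) - 1)) := by
        apply Real.rpow_le_rpow (by positivity) hxy (by positivity)
    _ = M.esymm (k - 1) := by
        rw [← Real.rpow_mul hz.le, mul_one_div, div_self (ne_of_gt hk1), Real.rpow_one]
end

section
/- Let Q ⊆ ℝᵐ be a bounded open set, and let w, v ∈ C²(Q) ∩ C⁰(cl Q) with v > 0 on cl Q. Let L(u) := ∑ G̃^{ij} ∂_{ij} u + ∑ b^i ∂_i u where G̃(x) is positive semi-definite at every point. Suppose L(w) ≥ -μ₁ and L(v) ≤ -μ₂ in Q for positive constants μ₁, μ₂. If w/v attains its maximum over cl Q at an interior point x₀ ∈ Q, then (w/v)(x₀) ≤ μ₁/μ₂. -/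
open Filter Topology

/-- 1-D second derivative test at a local max. -/
lemma second_deriv_nonpos_of_isLocalMax {g : ℝ → ℝ} {s : Set ℝ} (hs : IsOpen s)
    (h0 : (0:ℝ) ∈ s) (hg : ∀ t ∈ s, DifferentiableAt ℝ g t)
    (hg' : DifferentiableAt ℝ (deriv g) 0) (hmax : IsLocalMax g 0) :
    deriv (deriv g) 0 ≤ 0 := by
  by_contra hpos
  push_neg at hpos
  have h1 : deriv g 0 = 0 := hmax.deriv_eq_zero
  have hslope : Tendsto (slope (deriv g) 0) (𝓝[≠] 0) (𝓝 (deriv (deriv g) 0)) :=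
    hasDerivAt_iff_tendsto_slope.1 hg'.hasDerivAt
  have hev : ∀ᶠ t in 𝓝[≠] (0:ℝ), 0 < slope (deriv g) 0 t :=
    hslope.eventually (eventually_gt_nhds hpos)
  rw [eventually_nhdsWithin_iff, Metric.eventually_nhds_iff] at hev
  obtain ⟨ε₁, hε₁, hev⟩ := hev
  obtain ⟨ε₂, hε₂, hball⟩ := Metric.eventually_nhds_iff.1 (hmax.filter_mono (le_refl _))
  obtain ⟨ε₃, hε₃, hsub⟩ := Metric.isOpen_iff.1 hs 0 h0
  set ε := min ε₁ (min ε₂ ε₃) / 2 with hε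
  have hM : 0 < min ε₁ (min ε₂ ε₃) := lt_min hε₁ (lt_min hε₂ hε₃)
  have hεpos : 0 < ε := by positivity
  have hε1 : ε < ε₁ := by
    rw [hε]; linarith [min_le_left ε₁ (min ε₂ ε₃)]
  have hε2 : ε < ε₂ := by
    rw [hε]; linarith [min_le_right ε₁ (min ε₂ ε₃), min_le_left ε₂ ε₃]
  have hε3 : ε < ε₃ := by
    rw [hε]; linarith [min_le_right ε₁ (min ε₂ ε₃), min_le_right ε₂ ε₃]
  have hIcc : Set.Icc (0:ℝ) ε ⊆ s := by
    intro t ht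
    apply hsub
    simp only [Metric.mem_ball, Real.dist_eq, sub_zero]
    rw [abs_of_nonneg ht.1]
    linarith [ht.2]
  have hmono : StrictMonoOn g (Set.Icc 0 ε) := by
    apply strictMonoOn_of_deriv_pos (convex_Icc _ _)
    · exact fun t ht => (hg t (hIcc ht)).continuousAt.continuousWithinAt
    · intro t ht
      rw [interior_Icc] at ht
      have h2 : 0 < slope (deriv g) 0 t := by
        apply hev
        · simp only [Real.dist_eq, sub_zero]
          rw [abs_of_nonneg ht.1.le]
          linarith [ht.2]
        · exact ne_of_gt ht.1
      rw [slope_def_field, h1, sub_zero, sub_zero, div_pos_iff] at h2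
      rcases h2 with ⟨h2, _⟩ | ⟨_, h2⟩
      · exact h2
      · linarith [ht.1]
  have hgε : g 0 < g ε := hmono (Set.left_mem_Icc.2 hεpos.le) (Set.right_mem_Icc.2 hεpos.le) hεpos
  have : g ε ≤ g 0 := by
    apply hball
    simp only [Real.dist_eq, sub_zero]
    rw [abs_of_nonneg hεpos.le]
    exact hε2
  linarith

/-- Hessian quadratic form is nonpositive at an interior local max of a C² function. -/
lemma hessian_nonpos {E : Type*} [NormedAddCommGroup E] [NormedSpace ℝ E]
    {φ : E → ℝ} {Q : Set E} (hQ : IsOpen Q) {x₀ : E} (hx₀ : x₀ ∈ Q)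
    (hφ : ContDiffOn ℝ 2 φ Q) (hmax : IsLocalMax φ x₀) (u : E) :
    fderiv ℝ (fderiv ℝ φ) x₀ u u ≤ 0 := by
  have hca : ∀ x ∈ Q, ContDiffAt ℝ 2 φ x := fun x hx => hφ.contDiffAt (hQ.mem_nhds hx)
  have hfd : ∀ x ∈ Q, DifferentiableAt ℝ φ x := fun x hx =>
    (hca x hx).differentiableAt (by norm_num)
  have hf'd : DifferentiableAt ℝ (fderiv ℝ φ) x₀ :=
    ((hca x₀ hx₀).fderiv_right (m := 1) (by norm_num)).differentiableAt one_ne_zero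
  set L : ℝ → E := fun t => x₀ + t • u with hL
  have hLd : ∀ t : ℝ, HasDerivAt L u t := by
    intro t
    have h1 : HasDerivAt (fun t : ℝ => t • u) ((1:ℝ) • u) t := (hasDerivAt_id t).smul_const u
    rw [one_smul] at h1
    exact h1.const_add x₀
  have hLc : Continuous L := by fun_prop
  set s : Set ℝ := L ⁻¹' Q with hs
  have hso : IsOpen s := hQ.preimage hLc
  have h0s : (0:ℝ) ∈ s := by simp [hs, hL, hx₀]
  set g : ℝ → ℝ := φ ∘ L with hgdef
  have hgd : ∀ t ∈ s, HasDerivAt g (fderiv ℝ φ (L t) u) t := fun t ht =>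
    ((hfd _ ht).hasFDerivAt).comp_hasDerivAt t (hLd t)
  set F : E → ℝ := fun y => fderiv ℝ φ y u with hF
  have hderiv : ∀ t ∈ s, deriv g t = F (L t) := fun t ht => (hgd t ht).deriv
  have hevEq : deriv g =ᶠ[𝓝 (0:ℝ)] (F ∘ L) := by
    filter_upwards [hso.mem_nhds h0s] with t ht using hderiv t ht
  have hFder : HasFDerivAt F ((ContinuousLinearMap.apply ℝ ℝ u).comp
      (fderiv ℝ (fderiv ℝ φ) x₀)) x₀ :=
    (ContinuousLinearMap.apply ℝ ℝ u).hasFDerivAt.comp x₀ hf'd.hasFDerivAt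
  have hFL : HasDerivAt (F ∘ L) (fderiv ℝ (fderiv ℝ φ) x₀ u u) 0 := by
    have hL0 : L 0 = x₀ := by simp [hL]
    have hFder' : HasFDerivAt F ((ContinuousLinearMap.apply ℝ ℝ u).comp
        (fderiv ℝ (fderiv ℝ φ) x₀)) (L 0) := by rw [hL0]; exact hFder
    have h2 := hFder'.comp_hasDerivAt 0 (hLd 0)
    simpa using h2
  have hgmax : IsLocalMax g 0 := by
    have htd : Tendsto L (𝓝 0) (𝓝 x₀) := by
      have := hLc.continuousAt (x := (0:ℝ))
      simpa [hL] using this.tendsto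
    have h2 := htd.eventually hmax
    have hg0 : g 0 = φ x₀ := by simp [hgdef, hL]
    unfold IsLocalMax IsMaxFilter
    rw [hg0]
    exact h2
  have hdd : deriv (deriv g) 0 = fderiv ℝ (fderiv ℝ φ) x₀ u u := by
    rw [hevEq.deriv_eq]
    exact hFL.deriv
  rw [← hdd]
  exact second_deriv_nonpos_of_isLocalMax hso h0s
    (fun t ht => (hgd t ht).differentiableAt)
    (hevEq.differentiableAt_iff.2 hFL.differentiableAt) hgmax

lemma spartial_eq {E : Type*} [NormedAddCommGroup E] [NormedSpace ℝ E]
    {φ : E → ℝ} {x : E} (h : DifferentiableAt ℝ (fderiv ℝ φ) x) (a b : E) :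
    fderiv ℝ (fun y => fderiv ℝ φ y b) x a = fderiv ℝ (fderiv ℝ φ) x a b := by
  have := fderiv_clm_apply (c := fderiv ℝ φ) (u := fun _ => b) h (differentiableAt_const b)
  rw [this]
  simp

open scoped MatrixOrder in
/-- PSD pairing with a nonpositive quadratic form. -/
lemma psd_pairing_nonpos {m : ℕ} {G : Matrix (Fin m) (Fin m) ℝ} (hG : G.PosSemidef)
    {E : Type*} [NormedAddCommGroup E] [NormedSpace ℝ E]
    (H : E →L[ℝ] E →L[ℝ] ℝ) (e : Fin m → E) (hH : ∀ u : E, H u u ≤ 0) :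
    ∑ i, ∑ j, G i j * H (e i) (e j) ≤ 0 := by
  set S := CFC.sqrt G with hSdef
  have hS : S * S = G := CFC.sqrt_mul_sqrt_self G hG.nonneg
  have hsym : ∀ i j, S i j = S j i := fun i j =>
    (by simpa using (Matrix.nonneg_iff_posSemidef.1 (CFC.sqrt_nonneg G)).1.apply i j : S j i = S i j).symm
  have hGij : ∀ i j, G i j = ∑ k, S k i * S k j := by
    intro i j
    rw [← hS, Matrix.mul_apply]
    exact Finset.sum_congr rfl fun k _ => by rw [hsym i k]
  set u : Fin m → E := fun k => ∑ i, S k i • e i with hu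
  have expand : ∀ k, H (u k) (u k) = ∑ i, ∑ j, S k i * S k j * H (e j) (e i) := by
    intro k
    rw [hu]
    simp only [map_sum, map_smul, ContinuousLinearMap.coe_sum', Finset.sum_apply,
      ContinuousLinearMap.smul_apply, smul_eq_mul, Finset.mul_sum]
    exact Finset.sum_congr rfl fun i _ => Finset.sum_congr rfl fun j _ => by ring
  have key : ∑ i, ∑ j, G i j * H (e i) (e j) = ∑ k, H (u k) (u k) :=
    calc ∑ i, ∑ j, G i j * H (e i) (e j)
        = ∑ i, ∑ j, ∑ k, S k i * S k j * H (e i) (e j) := by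
          refine Finset.sum_congr rfl fun i _ => Finset.sum_congr rfl fun j _ => ?_
          rw [hGij i j, Finset.sum_mul]
      _ = ∑ i, ∑ k, ∑ j, S k i * S k j * H (e i) (e j) :=
          Finset.sum_congr rfl fun i _ => Finset.sum_comm
      _ = ∑ k, ∑ i, ∑ j, S k i * S k j * H (e i) (e j) := Finset.sum_comm
      _ = ∑ k, ∑ j, ∑ i, S k i * S k j * H (e i) (e j) :=
          Finset.sum_congr rfl fun k _ => Finset.sum_comm
      _ = ∑ k, H (u k) (u k) := by
          refine Finset.sum_congr rfl fun k _ => ?_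
          rw [expand k]
          exact Finset.sum_congr rfl fun a _ => Finset.sum_congr rfl fun b _ => by ring
  rw [key]
  exact Finset.sum_nonpos fun k _ => hH (u k)

/-- Second partial derivative `∂_{ij} u (x)`. -/
noncomputable def secondPartial (m : ℕ) (u : EuclideanSpace ℝ (Fin m) → ℝ)
    (x : EuclideanSpace ℝ (Fin m)) (i j : Fin m) : ℝ :=
  fderiv ℝ (fun y => fderiv ℝ u y (EuclideanSpace.single j 1)) x (EuclideanSpace.single i 1)

/-- The linear operator `L(u) = ∑ G̃^{ij} ∂_{ij} u + ∑ bⁱ ∂_i u`. -/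
noncomputable def Lop (m : ℕ) (G : EuclideanSpace ℝ (Fin m) → Matrix (Fin m) (Fin m) ℝ)
    (b : EuclideanSpace ℝ (Fin m) → Fin m → ℝ)
    (u : EuclideanSpace ℝ (Fin m) → ℝ) (x : EuclideanSpace ℝ (Fin m)) : ℝ :=
  (∑ i, ∑ j, G x i j * secondPartial m u x i j)
    + ∑ i, b x i * fderiv ℝ u x (EuclideanSpace.single i 1)

/-- Analytic core of the comparison principle (Lemma 3.1 of Ivochkina–Trudinger–Wang):
at an interior maximum point of `w/v` one has `(w/v)(x₀) ≤ μ₁/μ₂`. -/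
theorem stmt13 (m : ℕ) (Q : Set (EuclideanSpace ℝ (Fin m)))
    (w v : EuclideanSpace ℝ (Fin m) → ℝ)
    (G : EuclideanSpace ℝ (Fin m) → Matrix (Fin m) (Fin m) ℝ)
    (b : EuclideanSpace ℝ (Fin m) → Fin m → ℝ)
    (μ₁ μ₂ : ℝ) (hμ₁ : 0 < μ₁) (hμ₂ : 0 < μ₂)
    (hQo : IsOpen Q) (hQb : Bornology.IsBounded Q)
    (hw2 : ContDiffOn ℝ 2 w Q) (hv2 : ContDiffOn ℝ 2 v Q)
    (hwc : ContinuousOn w (closure Q)) (hvc : ContinuousOn v (closure Q))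
    (hvpos : ∀ x ∈ closure Q, 0 < v x)
    (hpsd : ∀ x ∈ Q, (G x).PosSemidef)
    (hLw : ∀ x ∈ Q, -μ₁ ≤ Lop m G b w x)
    (hLv : ∀ x ∈ Q, Lop m G b v x ≤ -μ₂)
    (x₀ : EuclideanSpace ℝ (Fin m)) (hx₀ : x₀ ∈ Q)
    (hmax : ∀ x ∈ closure Q, w x / v x ≤ w x₀ / v x₀) :
    w x₀ / v x₀ ≤ μ₁ / μ₂ := by
  set t := w x₀ / v x₀ with ht_def
  rcases le_or_gt t 0 with ht | ht
  · calc t ≤ 0 := ht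
    _ ≤ μ₁ / μ₂ := by positivity
  -- setup
  have hvx₀ : 0 < v x₀ := hvpos x₀ (subset_closure hx₀)
  set φ : EuclideanSpace ℝ (Fin m) → ℝ := fun y => w y - t * v y with hφ_def
  have hφ2 : ContDiffOn ℝ 2 φ Q := hw2.sub (contDiffOn_const.mul hv2)
  have hφ0 : φ x₀ = 0 := by
    simp only [hφ_def, ht_def]
    field_simp
    ring
  have hφmax : IsLocalMax φ x₀ := by
    unfold IsLocalMax IsMaxFilter
    rw [hφ0]
    filter_upwards [hQo.mem_nhds hx₀] with x hx
    have h4 := hmax x (subset_closure hx)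
    have hvx := hvpos x (subset_closure hx)
    rw [div_le_iff₀ hvx] at h4
    simp only [hφ_def]
    linarith
  have hgrad : fderiv ℝ φ x₀ = 0 := hφmax.fderiv_eq_zero
  -- differentiability
  have hwd : ∀ x ∈ Q, DifferentiableAt ℝ w x := fun x hx =>
    (hw2.contDiffAt (hQo.mem_nhds hx)).differentiableAt (by norm_num)
  have hvd : ∀ x ∈ Q, DifferentiableAt ℝ v x := fun x hx =>
    (hv2.contDiffAt (hQo.mem_nhds hx)).differentiableAt (by norm_num)
  have hw'd : DifferentiableAt ℝ (fderiv ℝ w) x₀ :=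
    ((hw2.contDiffAt (hQo.mem_nhds hx₀)).fderiv_right (m := 1)
      (by norm_num)).differentiableAt one_ne_zero
  have hv'd : DifferentiableAt ℝ (fderiv ℝ v) x₀ :=
    ((hv2.contDiffAt (hQo.mem_nhds hx₀)).fderiv_right (m := 1)
      (by norm_num)).differentiableAt one_ne_zero
  have hφ'd : DifferentiableAt ℝ (fderiv ℝ φ) x₀ :=
    ((hφ2.contDiffAt (hQo.mem_nhds hx₀)).fderiv_right (m := 1)
      (by norm_num)).differentiableAt one_ne_zero
  -- Lop φ x₀ ≤ 0
  have hsp : ∀ i j, secondPartial m φ x₀ i j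
      = fderiv ℝ (fderiv ℝ φ) x₀ (EuclideanSpace.single i 1) (EuclideanSpace.single j 1) := by
    intro i j
    unfold secondPartial
    exact spartial_eq hφ'd _ _
  have hHneg : ∀ u, fderiv ℝ (fderiv ℝ φ) x₀ u u ≤ 0 :=
    fun u => hessian_nonpos hQo hx₀ hφ2 hφmax u
  have hLφ : Lop m G b φ x₀ ≤ 0 := by
    unfold Lop
    have hterm2 : ∑ i, b x₀ i * fderiv ℝ φ x₀ (EuclideanSpace.single i 1) = 0 := by
      rw [hgrad]; simp
    rw [hterm2, add_zero]
    calc ∑ i, ∑ j, G x₀ i j * secondPartial m φ x₀ i j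
        = ∑ i, ∑ j, G x₀ i j * fderiv ℝ (fderiv ℝ φ) x₀
            (EuclideanSpace.single i 1) (EuclideanSpace.single j 1) := by
          exact Finset.sum_congr rfl fun i _ => Finset.sum_congr rfl fun j _ => by rw [hsp i j]
      _ ≤ 0 := psd_pairing_nonpos (hpsd x₀ hx₀) _ _ hHneg
  -- linearity of Lop
  have hfder : ∀ x ∈ Q, fderiv ℝ φ x = fderiv ℝ w x - t • fderiv ℝ v x := by
    intro x hx
    rw [hφ_def]
    rw [fderiv_fun_sub (hwd x hx) ((hvd x hx).const_mul t), fderiv_const_mul (hvd x hx)]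
  have h1 : ∀ u₀, fderiv ℝ φ x₀ u₀ = fderiv ℝ w x₀ u₀ - t * fderiv ℝ v x₀ u₀ := by
    intro u₀; rw [hfder x₀ hx₀]; simp
  have hspl : ∀ i j, secondPartial m φ x₀ i j
      = secondPartial m w x₀ i j - t * secondPartial m v x₀ i j := by
    intro i j
    have hdw : DifferentiableAt ℝ (fun y => fderiv ℝ w y (EuclideanSpace.single j 1)) x₀ :=
      hw'd.clm_apply (differentiableAt_const _)
    have hdv : DifferentiableAt ℝ (fun y => fderiv ℝ v y (EuclideanSpace.single j 1)) x₀ :=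
      hv'd.clm_apply (differentiableAt_const _)
    have hee : (fun y => fderiv ℝ φ y (EuclideanSpace.single j 1)) =ᶠ[𝓝 x₀]
        (fun y => fderiv ℝ w y (EuclideanSpace.single j 1)
          - t * fderiv ℝ v y (EuclideanSpace.single j 1)) := by
      filter_upwards [hQo.mem_nhds hx₀] with x hx
      rw [hfder x hx]
      simp
    unfold secondPartial
    rw [hee.fderiv_eq, fderiv_fun_sub hdw (hdv.const_mul t), fderiv_const_mul hdv]
    simp
  have hLlin : Lop m G b φ x₀ = Lop m G b w x₀ - t * Lop m G b v x₀ := by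
    unfold Lop
    have h2 : ∀ i j, G x₀ i j * secondPartial m φ x₀ i j
        = G x₀ i j * secondPartial m w x₀ i j - t * (G x₀ i j * secondPartial m v x₀ i j) := by
      intro i j; rw [hspl i j]; ring
    have h3 : ∀ i, b x₀ i * fderiv ℝ φ x₀ (EuclideanSpace.single i 1)
        = b x₀ i * fderiv ℝ w x₀ (EuclideanSpace.single i 1)
          - t * (b x₀ i * fderiv ℝ v x₀ (EuclideanSpace.single i 1)) := by
      intro i; rw [h1]; ring
    simp only [h2, h3, Finset.sum_sub_distrib, ← Finset.mul_sum]
    ring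
  -- conclude
  have hLw₀ := hLw x₀ hx₀
  have hLv₀ := hLv x₀ hx₀
  have hfinal : t * μ₂ ≤ μ₁ := by nlinarith
  rw [le_div_iff₀ hμ₂]
  linarith
end
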